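/- arXiv:math/0610895 — 4 statements merged into one kernel-verified Lean document; each statement's English description precedes it below -/
import Mathlib

section
/- Suppose α = (β^m − γ^m)/(q − q⁻¹) and (β/γ)^m ≠ q^{2mn} for every integer n ≥ 0. Then the left U-module U/P_{1,∞}, where P_{1,∞} = U(EF − α) + U(K − β) + U(H − γ) + UE, is an infinite-dimensional irreducible (simple) representation of U. -/
set_option synthInstance.maxHeartbeats 1000000
set_option maxHeartbeats 1000000

noncomputable section

open FreeAlgebra

/-- Generators of the quantum group `U_q(f(K,H))`. -/
inductive Gen : Type
  | E | F | K | Kinv | H | Hinv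

/-- The free algebra on the generators. -/
abbrev FA : Type := FreeAlgebra ℂ Gen

def gE : FA := ι ℂ Gen.E
def gF : FA := ι ℂ Gen.F
def gK : FA := ι ℂ Gen.K
def gKi : FA := ι ℂ Gen.Kinv
def gH : FA := ι ℂ Gen.H
def gHi : FA := ι ℂ Gen.Hinv

/-- The defining relations of `U_q(f(K,H))`, where `r` is the element of the free
algebra representing the Laurent polynomial `f(K,H)` appearing in `EF - FE = f(K,H)`. -/
inductive URel (q : ℂ) (r : FA) : FA → FA → Prop
  | KKi : URel q r (gK * gKi) 1
  | KiK : URel q r (gKi * gK) 1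
  | HHi : URel q r (gH * gHi) 1
  | HiH : URel q r (gHi * gH) 1
  | KH  : URel q r (gK * gH) (gH * gK)
  | KE  : URel q r (gK * gE) (q ^ 2 • (gE * gK))
  | KF  : URel q r (gK * gF) ((q ^ 2)⁻¹ • (gF * gK))
  | HE  : URel q r (gH * gE) ((q ^ 2)⁻¹ • (gE * gH))
  | HF  : URel q r (gH * gF) (q ^ 2 • (gF * gH))
  | EF  : URel q r (gE * gF - gF * gE) r

/-- `U_q(f(K,H))` as a quotient of the free algebra. -/
abbrev Uq (q : ℂ) (r : FA) : Type := RingQuot (URel q r)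

variable (q : ℂ) (r : FA)

def uE : Uq q r := RingQuot.mkAlgHom ℂ (URel q r) gE
def uF : Uq q r := RingQuot.mkAlgHom ℂ (URel q r) gF
def uK : Uq q r := RingQuot.mkAlgHom ℂ (URel q r) gK
def uKi : Uq q r := RingQuot.mkAlgHom ℂ (URel q r) gKi
def uH : Uq q r := RingQuot.mkAlgHom ℂ (URel q r) gH
def uHi : Uq q r := RingQuot.mkAlgHom ℂ (URel q r) gHi

/-- The element `f_m(K,H) = (K^m - H^m)/(q - q⁻¹)` of the free algebra. -/
def fm (q : ℂ) (m : ℕ) : FA := (q - q⁻¹)⁻¹ • (gK ^ m - gH ^ m)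

/-- The quantum group `U_q(f_m(K,H))`. -/
abbrev Um (q : ℂ) (m : ℕ) : Type := Uq q (fm q m)

end
/-- The left ideal `P_{1,n+1} = U(EF - α) + U(K - β) + U(H - γ) + UE + UF^{n+1}`. -/
noncomputable def P1n (q : ℂ) (m : ℕ) (α β γ : ℂ) (n : ℕ) :
    Submodule (Um q m) (Um q m) :=
  Submodule.span (Um q m)
    {uE q (fm q m) * uF q (fm q m) - algebraMap ℂ (Um q m) α,
     uK q (fm q m) - algebraMap ℂ (Um q m) β,
     uH q (fm q m) - algebraMap ℂ (Um q m) γ,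
     uE q (fm q m),
     uF q (fm q m) ^ (n + 1)}

/-- The left ideal `P_{1,∞} = U(EF - α) + U(K - β) + U(H - γ) + UE`. -/
noncomputable def P1inf (q : ℂ) (m : ℕ) (α β γ : ℂ) :
    Submodule (Um q m) (Um q m) :=
  Submodule.span (Um q m)
    {uE q (fm q m) * uF q (fm q m) - algebraMap ℂ (Um q m) α,
     uK q (fm q m) - algebraMap ℂ (Um q m) β,
     uH q (fm q m) - algebraMap ℂ (Um q m) γ,
     uE q (fm q m)}

/-- The left ideal `P_{∞,1} = U(EF - α) + U(K - β) + U(H - γ) + UF`. -/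
noncomputable def Pinf1 (q : ℂ) (m : ℕ) (α β γ : ℂ) :
    Submodule (Um q m) (Um q m) :=
  Submodule.span (Um q m)
    {uE q (fm q m) * uF q (fm q m) - algebraMap ℂ (Um q m) α,
     uK q (fm q m) - algebraMap ℂ (Um q m) β,
     uH q (fm q m) - algebraMap ℂ (Um q m) γ,
     uF q (fm q m)}

/-- The left ideal `P_{∞,∞} = U(EF - α) + U(K - β) + U(H - γ)`. -/
noncomputable def Pinfinf (q : ℂ) (m : ℕ) (α β γ : ℂ) :
    Submodule (Um q m) (Um q m) :=
  Submodule.span (Um q m)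
    {uE q (fm q m) * uF q (fm q m) - algebraMap ℂ (Um q m) α,
     uK q (fm q m) - algebraMap ℂ (Um q m) β,
     uH q (fm q m) - algebraMap ℂ (Um q m) γ}
namespace Stmt3Aux

noncomputable section

abbrev V : Type := ℕ →₀ ℂ

def v0 : V := Finsupp.single 0 1

def diag (f : ℕ → ℂ) : Module.End ℂ V := Finsupp.lsum ℂ fun i => f i • Finsupp.lsingle i

@[simp] lemma diag_single (f : ℕ → ℂ) (i : ℕ) (b : ℂ) :
    diag f (Finsupp.single i b) = f i • Finsupp.single i b := by
  simp [diag]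

def Fop : Module.End ℂ V := Finsupp.lmapDomain ℂ ℂ (· + 1)

@[simp] lemma Fop_single (i : ℕ) (b : ℂ) :
    Fop (Finsupp.single i b) = Finsupp.single (i + 1) b := by
  simp [Fop, Finsupp.mapDomain_single]

section params
variable (q β γ : ℂ) (m : ℕ)

def lk : ℕ → ℂ := fun i => β * ((q ^ 2)⁻¹) ^ i
def lh : ℕ → ℂ := fun i => γ * (q ^ 2) ^ i
def dd (i : ℕ) : ℂ := (q - q⁻¹)⁻¹ * (lk q β i ^ m - lh q γ i ^ m)
def cc : ℕ → ℂ
  | 0 => 0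
  | n + 1 => cc n + dd q β γ m n

def Eop : Module.End ℂ V := Finsupp.lsum ℂ fun i =>
  match i with
  | 0 => 0
  | j + 1 => cc q β γ m (j + 1) • Finsupp.lsingle j

@[simp] lemma Eop_single_zero (b : ℂ) : Eop q β γ m (Finsupp.single 0 b) = 0 := by
  simp [Eop]

@[simp] lemma Eop_single_succ (j : ℕ) (b : ℂ) :
    Eop q β γ m (Finsupp.single (j + 1) b) = cc q β γ m (j + 1) • Finsupp.single j b := by
  simp [Eop]

lemma diag_mul (f g : ℕ → ℂ) : diag f * diag g = diag (fun i => f i * g i) := by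
  apply Finsupp.lhom_ext
  intro a b
  rw [Module.End.mul_apply, diag_single, map_smul, diag_single, diag_single, smul_smul, mul_comm]

lemma diag_pow (f : ℕ → ℂ) (n : ℕ) : diag f ^ n = diag (fun i => f i ^ n) := by
  induction n with
  | zero =>
    apply Finsupp.lhom_ext
    intro a b
    simp
  | succ k ih => rw [pow_succ, ih, diag_mul]; simp [pow_succ]

end params

end
end Stmt3Aux
namespace Stmt3Aux
noncomputable section
section params
variable (q β γ : ℂ) (m : ℕ)

def gens : Gen → Module.End ℂ V := fun g =>
  match g with
  | .E => Eop q β γ m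
  | .F => Fop
  | .K => diag (lk q β)
  | .Kinv => diag fun i => (lk q β i)⁻¹
  | .H => diag (lh q γ)
  | .Hinv => diag fun i => (lh q γ i)⁻¹

variable {q β γ}

lemma lk_ne (hq0 : q ≠ 0) (hβ : β ≠ 0) (i : ℕ) : lk q β i ≠ 0 :=
  mul_ne_zero hβ (pow_ne_zero _ (inv_ne_zero (pow_ne_zero _ hq0)))

lemma lh_ne (hq0 : q ≠ 0) (hγ : γ ≠ 0) (i : ℕ) : lh q γ i ≠ 0 :=
  mul_ne_zero hγ (pow_ne_zero _ (pow_ne_zero _ hq0))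

lemma lk_succ (j : ℕ) : lk q β (j + 1) = (q ^ 2)⁻¹ * lk q β j := by
  simp only [lk, pow_succ]; ring

lemma lh_succ (j : ℕ) : lh q γ (j + 1) = q ^ 2 * lh q γ j := by
  simp only [lh, pow_succ]; ring

lemma cc_succ (n : ℕ) : cc q β γ m (n + 1) = cc q β γ m n + dd q β γ m n := rfl

lemma diag_mul_inv (f : ℕ → ℂ) (hf : ∀ i, f i ≠ 0) :
    diag f * diag (fun i => (f i)⁻¹) = 1 := by
  rw [diag_mul]
  apply Finsupp.lhom_ext
  intro a b
  simp [mul_inv_cancel₀ (hf a)]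

lemma diag_inv_mul (f : ℕ → ℂ) (hf : ∀ i, f i ≠ 0) :
    diag (fun i => (f i)⁻¹) * diag f = 1 := by
  rw [diag_mul]
  apply Finsupp.lhom_ext
  intro a b
  simp [inv_mul_cancel₀ (hf a)]

def rho (hq0 : q ≠ 0) (hβ : β ≠ 0) (hγ : γ ≠ 0) : Um q m →ₐ[ℂ] Module.End ℂ V :=
  RingQuot.liftAlgHom ℂ ⟨FreeAlgebra.lift ℂ (gens q β γ m), by
    have hq2 : (q : ℂ) ^ 2 ≠ 0 := pow_ne_zero _ hq0
    intro x y h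
    induction h with
    | KKi =>
      simp only [gK, gKi, map_mul, map_one, FreeAlgebra.lift_ι_apply, gens]
      exact diag_mul_inv _ (lk_ne hq0 hβ)
    | KiK =>
      simp only [gK, gKi, map_mul, map_one, FreeAlgebra.lift_ι_apply, gens]
      exact diag_inv_mul _ (lk_ne hq0 hβ)
    | HHi =>
      simp only [gH, gHi, map_mul, map_one, FreeAlgebra.lift_ι_apply, gens]
      exact diag_mul_inv _ (lh_ne hq0 hγ)
    | HiH =>
      simp only [gH, gHi, map_mul, map_one, FreeAlgebra.lift_ι_apply, gens]
      exact diag_inv_mul _ (lh_ne hq0 hγ)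
    | KH =>
      simp only [gK, gH, map_mul, FreeAlgebra.lift_ι_apply, gens]
      rw [diag_mul, diag_mul]
      congr 1
      ext i
      ring
    | KE =>
      simp only [gK, gE, map_mul, map_smul, FreeAlgebra.lift_ι_apply, gens]
      apply Finsupp.lhom_ext
      intro a b
      cases a with
      | zero =>
        simp only [Module.End.mul_apply, LinearMap.smul_apply, diag_single,
          Finsupp.smul_single, smul_eq_mul, Eop_single_zero, map_zero, smul_zero]
      | succ j =>
        simp only [Module.End.mul_apply, LinearMap.smul_apply, Eop_single_succ, diag_single,
          Finsupp.smul_single, smul_eq_mul]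
        congr 1
        rw [lk_succ]
        field_simp
    | KF =>
      simp only [gK, gF, map_mul, map_smul, FreeAlgebra.lift_ι_apply, gens]
      apply Finsupp.lhom_ext
      intro a b
      simp only [Module.End.mul_apply, LinearMap.smul_apply, Fop_single, diag_single,
        Finsupp.smul_single, smul_eq_mul]
      congr 1
      rw [lk_succ]
      ring
    | HE =>
      simp only [gH, gE, map_mul, map_smul, FreeAlgebra.lift_ι_apply, gens]
      apply Finsupp.lhom_ext
      intro a b
      cases a with
      | zero =>
        simp only [Module.End.mul_apply, LinearMap.smul_apply, diag_single,
          Finsupp.smul_single, smul_eq_mul, Eop_single_zero, map_zero, smul_zero]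
      | succ j =>
        simp only [Module.End.mul_apply, LinearMap.smul_apply, Eop_single_succ, diag_single,
          Finsupp.smul_single, smul_eq_mul]
        congr 1
        rw [lh_succ]
        field_simp
    | HF =>
      simp only [gH, gF, map_mul, map_smul, FreeAlgebra.lift_ι_apply, gens]
      apply Finsupp.lhom_ext
      intro a b
      simp only [Module.End.mul_apply, LinearMap.smul_apply, Fop_single, diag_single,
        Finsupp.smul_single, smul_eq_mul]
      congr 1
      rw [lh_succ]
      ring
    | EF =>
      simp only [gE, gF, gK, gH, fm, map_mul, map_sub, map_smul, map_pow,
        FreeAlgebra.lift_ι_apply, gens, diag_pow]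
      apply Finsupp.lhom_ext
      intro a b
      cases a with
      | zero =>
        simp only [LinearMap.sub_apply, Module.End.mul_apply, LinearMap.smul_apply,
          Fop_single, Eop_single_zero, Eop_single_succ, diag_single, map_zero,
          Finsupp.smul_single, smul_eq_mul, sub_zero]
        rw [← Finsupp.single_sub, Finsupp.smul_single]
        congr 1
        rw [cc_succ]
        simp only [cc, dd, smul_eq_mul]
        ring
      | succ j =>
        simp only [LinearMap.sub_apply, Module.End.mul_apply, LinearMap.smul_apply,
          Fop_single, Eop_single_succ, diag_single, Finsupp.smul_single, smul_eq_mul]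
        rw [← Finsupp.single_sub, ← Finsupp.single_sub, Finsupp.smul_single]
        congr 1
        rw [cc_succ]
        simp only [dd, smul_eq_mul]
        ring⟩

end params
end
end Stmt3Aux
namespace Stmt3Aux
noncomputable section

lemma swap_pow {A : Type*} [Ring A] [Algebra ℂ A] {X Y : A} {z : ℂ}
    (h : X * Y = z • (Y * X)) (i : ℕ) : X * Y ^ i = z ^ i • (Y ^ i * X) := by
  induction i with
  | zero => simp
  | succ n ih =>
    calc X * Y ^ (n + 1) = (X * Y ^ n) * Y := by rw [pow_succ, mul_assoc]
    _ = (z ^ n • (Y ^ n * X)) * Y := by rw [ih]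
    _ = z ^ n • (Y ^ n * (X * Y)) := by rw [smul_mul_assoc, mul_assoc]
    _ = z ^ n • (Y ^ n * (z • (Y * X))) := by rw [h]
    _ = z ^ (n + 1) • (Y ^ (n + 1) * X) := by
        rw [mul_smul_comm, smul_smul, ← pow_succ, ← mul_assoc, ← pow_succ]

lemma swap_pow' {A : Type*} [Ring A] [Algebra ℂ A] {X Y : A} {z : ℂ}
    (h : X * Y = z • (Y * X)) (a : ℕ) : X ^ a * Y = z ^ a • (Y * X ^ a) := by
  induction a with
  | zero => simp
  | succ n ih =>
    calc X ^ (n + 1) * Y = X ^ n * (X * Y) := by rw [pow_succ, mul_assoc]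
    _ = X ^ n * (z • (Y * X)) := by rw [h]
    _ = z • ((X ^ n * Y) * X) := by rw [mul_smul_comm, mul_assoc]
    _ = z • ((z ^ n • (Y * X ^ n)) * X) := by rw [ih]
    _ = z ^ (n + 1) • (Y * X ^ (n + 1)) := by
        rw [smul_mul_assoc, smul_smul, ← pow_succ', mul_assoc, ← pow_succ]

section umrel
variable (q : ℂ) (m : ℕ)

local notation "E!" => uE q (fm q m)
local notation "F!" => uF q (fm q m)
local notation "K!" => uK q (fm q m)
local notation "Ki!" => uKi q (fm q m)
local notation "H!" => uH q (fm q m)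
local notation "Hi!" => uHi q (fm q m)
local notation "mk!" => RingQuot.mkAlgHom ℂ (URel q (fm q m))

lemma rel_KKi : K! * Ki! = 1 := by
  have h := RingQuot.mkAlgHom_rel ℂ (URel.KKi (q := q) (r := fm q m))
  simpa only [map_mul, map_one, uK, uKi] using h

lemma rel_KiK : Ki! * K! = 1 := by
  have h := RingQuot.mkAlgHom_rel ℂ (URel.KiK (q := q) (r := fm q m))
  simpa only [map_mul, map_one, uK, uKi] using h

lemma rel_HHi : H! * Hi! = 1 := by
  have h := RingQuot.mkAlgHom_rel ℂ (URel.HHi (q := q) (r := fm q m))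
  simpa only [map_mul, map_one, uH, uHi] using h

lemma rel_HiH : Hi! * H! = 1 := by
  have h := RingQuot.mkAlgHom_rel ℂ (URel.HiH (q := q) (r := fm q m))
  simpa only [map_mul, map_one, uH, uHi] using h

lemma rel_KF : K! * F! = (q ^ 2)⁻¹ • (F! * K!) := by
  have h := RingQuot.mkAlgHom_rel ℂ (URel.KF (q := q) (r := fm q m))
  simpa only [map_mul, map_smul, uK, uF] using h

lemma rel_HF : H! * F! = q ^ 2 • (F! * H!) := by
  have h := RingQuot.mkAlgHom_rel ℂ (URel.HF (q := q) (r := fm q m))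
  simpa only [map_mul, map_smul, uH, uF] using h

lemma rel_EF : E! * F! - F! * E! = (q - q⁻¹)⁻¹ • (K! ^ m - H! ^ m) := by
  have h := RingQuot.mkAlgHom_rel ℂ (URel.EF (q := q) (r := fm q m))
  have h2 : mk! (fm q m) = (q - q⁻¹)⁻¹ • (mk! gK ^ m - mk! gH ^ m) := by
    rw [← map_pow, ← map_pow, ← map_sub, ← map_smul]; rfl
  rw [map_sub, map_mul, map_mul, h2] at h
  exact h

lemma rel_KiF (hq0 : q ≠ 0) : Ki! * F! = q ^ 2 • (F! * Ki!) := by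
  have h1 : F! * Ki! = (q ^ 2)⁻¹ • (Ki! * F!) := by
    calc F! * Ki! = Ki! * (K! * F!) * Ki! := by
          rw [← mul_assoc, rel_KiK, one_mul]
    _ = (q ^ 2)⁻¹ • (Ki! * (F! * (K! * Ki!))) := by
          rw [rel_KF, mul_smul_comm, smul_mul_assoc, mul_assoc, mul_assoc]
    _ = (q ^ 2)⁻¹ • (Ki! * F!) := by rw [rel_KKi, mul_one]
  rw [h1, smul_smul, mul_inv_cancel₀ (pow_ne_zero _ hq0), one_smul]

lemma rel_HiF (hq0 : q ≠ 0) : Hi! * F! = (q ^ 2)⁻¹ • (F! * Hi!) := by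
  have h1 : F! * Hi! = q ^ 2 • (Hi! * F!) := by
    calc F! * Hi! = Hi! * (H! * F!) * Hi! := by
          rw [← mul_assoc, rel_HiH, one_mul]
    _ = q ^ 2 • (Hi! * (F! * (H! * Hi!))) := by
          rw [rel_HF, mul_smul_comm, smul_mul_assoc, mul_assoc, mul_assoc]
    _ = q ^ 2 • (Hi! * F!) := by rw [rel_HHi, mul_one]
  rw [h1, smul_smul, inv_mul_cancel₀ (pow_ne_zero _ hq0), one_smul]

end umrel
end
end Stmt3Aux
namespace Stmt3Aux
noncomputable section
section pmem
variable (q α β γ : ℂ) (m : ℕ)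

local notation "E!" => uE q (fm q m)
local notation "F!" => uF q (fm q m)
local notation "K!" => uK q (fm q m)
local notation "Ki!" => uKi q (fm q m)
local notation "H!" => uH q (fm q m)
local notation "Hi!" => uHi q (fm q m)
local notation "AA" => algebraMap ℂ (Um q m)
local notation "P!" => P1inf q m α β γ

lemma mulAA (x : Um q m) (c : ℂ) : x * AA c = c • x := by
  rw [← Algebra.commutes, ← Algebra.smul_def]

lemma pEFgen : E! * F! - AA α ∈ P! := Submodule.subset_span (Set.mem_insert _ _)

lemma pKgen : K! - AA β ∈ P! :=
  Submodule.subset_span (Set.mem_insert_of_mem _ (Set.mem_insert _ _))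

lemma pHgen : H! - AA γ ∈ P! :=
  Submodule.subset_span (Set.mem_insert_of_mem _ (Set.mem_insert_of_mem _ (Set.mem_insert _ _)))

lemma pEgen : E! ∈ P! :=
  Submodule.subset_span (Set.mem_insert_of_mem _ (Set.mem_insert_of_mem _
    (Set.mem_insert_of_mem _ rfl)))

variable {q α β γ m}

lemma pXF {X : Um q m} {z c : ℂ} (hc : X * F! = z • (F! * X)) (hm : X - AA c ∈ P!) (i : ℕ) :
    X * F! ^ i - (z ^ i * c) • F! ^ i ∈ P! := by
  have h2 : F! ^ i * (X - AA c) ∈ P! := by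
    have := Submodule.smul_mem P! (F! ^ i) hm
    rwa [smul_eq_mul] at this
  have h3 : X * F! ^ i - (z ^ i * c) • F! ^ i = z ^ i • (F! ^ i * (X - AA c)) := by
    rw [mul_sub, mulAA, smul_sub, smul_smul, swap_pow hc]
  rw [h3]
  exact Submodule.smul_of_tower_mem _ _ h2

lemma pPow {X : Um q m} {c : ℂ} (hX : X - AA c ∈ P!) (a : ℕ) : X ^ a - AA (c ^ a) ∈ P! := by
  induction a with
  | zero => simpa using Submodule.zero_mem P!
  | succ n ih =>
    have key : X ^ (n + 1) - AA (c ^ (n + 1))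
        = X * (X ^ n - AA (c ^ n)) + AA (c ^ n) * (X - AA c) := by
      rw [mul_sub, mul_sub, ← map_mul, ← pow_succ, ← Algebra.commutes (c ^ n) X,
        ← pow_succ']
      abel
    rw [key]
    refine add_mem ?_ ?_
    · have := Submodule.smul_mem P! X ih; rwa [smul_eq_mul] at this
    · have := Submodule.smul_mem P! (AA (c ^ n)) hX; rwa [smul_eq_mul] at this

lemma pKigen (hβ : β ≠ 0) : Ki! - AA β⁻¹ ∈ P! := by
  have h1 : Ki! * (K! - AA β) ∈ P! := by
    have := Submodule.smul_mem P! Ki! (pKgen q α β γ m)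
    rwa [smul_eq_mul] at this
  have h2 : Ki! * (K! - AA β) = 1 - β • Ki! := by
    rw [mul_sub, rel_KiK, mulAA]
  have h3 : Ki! - AA β⁻¹ = (-β⁻¹) • (Ki! * (K! - AA β)) := by
    rw [h2, Algebra.algebraMap_eq_smul_one]
    match_scalars <;> field_simp
  rw [h3]
  exact Submodule.smul_of_tower_mem _ _ h1

lemma pHigen (hγ : γ ≠ 0) : Hi! - AA γ⁻¹ ∈ P! := by
  have h1 : Hi! * (H! - AA γ) ∈ P! := by
    have := Submodule.smul_mem P! Hi! (pHgen q α β γ m)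
    rwa [smul_eq_mul] at this
  have h2 : Hi! * (H! - AA γ) = 1 - γ • Hi! := by
    rw [mul_sub, rel_HiH, mulAA]
  have h3 : Hi! - AA γ⁻¹ = (-γ⁻¹) • (Hi! * (H! - AA γ)) := by
    rw [h2, Algebra.algebraMap_eq_smul_one]
    match_scalars <;> field_simp
  rw [h3]
  exact Submodule.smul_of_tower_mem _ _ h1

lemma pWF (i : ℕ) :
    (E! * F! - F! * E!) * F! ^ i - dd q β γ m i • F! ^ i ∈ P! := by
  have p1 : K! ^ m * F! ^ i - (((q ^ 2)⁻¹ ^ m) ^ i * β ^ m) • F! ^ i ∈ P! :=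
    pXF (swap_pow' (rel_KF q m) m) (pPow (pKgen q α β γ m) m) i
  have p2 : H! ^ m * F! ^ i - (((q ^ 2) ^ m) ^ i * γ ^ m) • F! ^ i ∈ P! :=
    pXF (swap_pow' (rel_HF q m) m) (pPow (pHgen q α β γ m) m) i
  have key : (E! * F! - F! * E!) * F! ^ i - dd q β γ m i • F! ^ i
      = (q - q⁻¹)⁻¹ • ((K! ^ m * F! ^ i - (((q ^ 2)⁻¹ ^ m) ^ i * β ^ m) • F! ^ i)
        - (H! ^ m * F! ^ i - (((q ^ 2) ^ m) ^ i * γ ^ m) • F! ^ i)) := by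
    rw [rel_EF, smul_mul_assoc, sub_mul]
    simp only [dd, lk, lh]
    match_scalars <;> ring
  rw [key]
  exact Submodule.smul_of_tower_mem _ _ (sub_mem p1 p2)

lemma pEFS (i : ℕ) :
    E! * F! ^ (i + 1) - cc q β γ m (i + 1) • F! ^ i ∈ P! := by
  induction i with
  | zero =>
    have h1 : F! * E! ∈ P! := by
      have := Submodule.smul_mem P! F! (pEgen q α β γ m)
      rwa [smul_eq_mul] at this
    have h2 := pWF (q := q) (α := α) (β := β) (γ := γ) (m := m) 0
    have key : E! * F! ^ 1 - cc q β γ m 1 • F! ^ 0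
        = F! * E! + ((E! * F! - F! * E!) * F! ^ 0 - dd q β γ m 0 • F! ^ 0) := by
      rw [cc_succ]
      simp only [cc, pow_zero, pow_one, mul_one, zero_add]
      abel
    rw [key]
    exact add_mem h1 h2
  | succ n ih =>
    have h1 : F! * (E! * F! ^ (n + 1) - cc q β γ m (n + 1) • F! ^ n) ∈ P! := by
      have := Submodule.smul_mem P! F! ih
      rwa [smul_eq_mul] at this
    have h2 := pWF (q := q) (α := α) (β := β) (γ := γ) (m := m) (n + 1)
    have key : E! * F! ^ (n + 2) - cc q β γ m (n + 2) • F! ^ (n + 1)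
        = F! * (E! * F! ^ (n + 1) - cc q β γ m (n + 1) • F! ^ n)
          + ((E! * F! - F! * E!) * F! ^ (n + 1) - dd q β γ m (n + 1) • F! ^ (n + 1)) := by
      have e1 : E! * F! ^ (n + 2) = F! * (E! * F! ^ (n + 1)) + (E! * F! - F! * E!) * F! ^ (n + 1) := by
        have e0 : F! * (E! * F! ^ (n + 1)) = (F! * E!) * F! ^ (n + 1) := by rw [mul_assoc]
        rw [e0, sub_mul, pow_succ' (M := Um q m) F! (n + 1), ← mul_assoc]
        abel
      rw [e1, cc_succ, add_smul, mul_sub, mul_smul_comm, ← pow_succ']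
      abel
    rw [key]
    exact add_mem h1 h2

end pmem
end
end Stmt3Aux
namespace Stmt3Aux
noncomputable section
section ccform
variable {q β γ : ℂ} {m : ℕ}

lemma dd_mul (hq0 : q ≠ 0) (hq21 : q ^ 2 - 1 ≠ 0) (i : ℕ) :
    dd q β γ m i * ((q - q⁻¹) * q ^ (2 * m * i))
      = β ^ m - γ ^ m * q ^ (2 * m * i) * q ^ (2 * m * i) := by
  have hQd : q - q⁻¹ ≠ 0 := by
    intro h
    apply hq21
    have : (q - q⁻¹) * q = q ^ 2 - 1 := by field_simp
    rw [← this, h, zero_mul]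
  simp only [dd, lk, lh, mul_pow, inv_pow, ← pow_mul]
  rw [show (2 : ℕ) * i * m = 2 * m * i from by ring]
  have h1 : q ^ (2 * m * i) ≠ 0 := pow_ne_zero _ hq0
  have hA : (q - q⁻¹)⁻¹ * (q - q⁻¹) = 1 := inv_mul_cancel₀ hQd
  have hB : (q ^ (2 * m * i))⁻¹ * q ^ (2 * m * i) = 1 := inv_mul_cancel₀ h1
  linear_combination ((β ^ m * (q ^ (2 * m * i))⁻¹ - γ ^ m * q ^ (2 * m * i)) * q ^ (2 * m * i)) * hA
    + β ^ m * hB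

lemma cc_form (hq0 : q ≠ 0) (hq21 : q ^ 2 - 1 ≠ 0) (n : ℕ) :
    cc q β γ m (n + 1) * ((q - q⁻¹) * (q ^ (2 * m) - 1) * q ^ (2 * m * n))
      = (q ^ (2 * m * (n + 1)) - 1) * (β ^ m - γ ^ m * q ^ (2 * m * n)) := by
  induction n with
  | zero =>
    rw [cc_succ]
    simp only [cc, zero_add]
    linear_combination (q ^ (2 * m) - 1) * dd_mul (β := β) (γ := γ) (m := m) hq0 hq21 0
  | succ k ih =>
    rw [cc_succ]
    linear_combination q ^ (2 * m) * ih
      + (q ^ (2 * m) - 1) * dd_mul (β := β) (γ := γ) (m := m) hq0 hq21 (k + 1)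

lemma cc_ne (hq0 : q ≠ 0) (hq : ∀ n : ℕ, 0 < n → q ^ n ≠ 1) (hm : 1 ≤ m) (hγ : γ ≠ 0)
    (hn : ∀ n : ℕ, (β / γ) ^ m ≠ q ^ (2 * m * n)) (n : ℕ) :
    cc q β γ m (n + 1) ≠ 0 := by
  have hq21 : q ^ 2 - 1 ≠ 0 := sub_ne_zero_of_ne (hq 2 (by norm_num))
  intro h0
  have hform := cc_form (β := β) (γ := γ) (m := m) hq0 hq21 n
  rw [h0, zero_mul] at hform
  have f1 : q ^ (2 * m * (n + 1)) - 1 ≠ 0 :=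
    sub_ne_zero_of_ne (hq _ (by positivity))
  have f2 : β ^ m - γ ^ m * q ^ (2 * m * n) ≠ 0 := by
    intro h
    apply hn n
    have hb : β ^ m = γ ^ m * q ^ (2 * m * n) := sub_eq_zero.mp h
    rw [div_pow, hb, mul_comm, mul_div_assoc, div_self (pow_ne_zero _ hγ), mul_one]
  exact mul_ne_zero f1 f2 hform.symm

lemma qpow_inj (hq0 : q ≠ 0) (hq : ∀ n : ℕ, 0 < n → q ^ n ≠ 1) {i j : ℕ}
    (h : (q ^ 2) ^ i = (q ^ 2) ^ j) : i = j := by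
  have key : ∀ i j : ℕ, i ≤ j → (q ^ 2) ^ i = (q ^ 2) ^ j → i = j := by
    intro i j hij hh
    have hj : j = i + (j - i) := by omega
    rw [hj, pow_add] at hh
    have h1 : (q ^ 2) ^ (j - i) = 1 := by
      have := mul_left_cancel₀ (pow_ne_zero i (pow_ne_zero 2 hq0))
        (a := (q ^ 2) ^ i) (b := (1 : ℂ)) (c := (q ^ 2) ^ (j - i))
        (by rw [mul_one, ← hh])
      exact this.symm
    by_contra hne
    exact hq (2 * (j - i)) (by omega) (by rw [pow_mul]; exact h1)
  rcases le_total i j with hij | hij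
  · exact key i j hij h
  · exact (key j i hij h.symm).symm

lemma lk_inj (hq0 : q ≠ 0) (hq : ∀ n : ℕ, 0 < n → q ^ n ≠ 1) (hβ : β ≠ 0) {i j : ℕ}
    (h : lk q β i = lk q β j) : i = j := by
  simp only [lk] at h
  have h2 := mul_left_cancel₀ hβ h
  simp only [inv_pow] at h2
  exact qpow_inj hq0 hq (inv_injective h2)

end ccform
end
end Stmt3Aux
namespace Stmt3Aux
noncomputable section
section evsec
variable {q α β γ : ℂ} {m : ℕ}

local notation "E!" => uE q (fm q m)
local notation "F!" => uF q (fm q m)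
local notation "K!" => uK q (fm q m)
local notation "H!" => uH q (fm q m)
local notation "AA" => algebraMap ℂ (Um q m)

lemma rho_mk (hq0 : q ≠ 0) (hβ : β ≠ 0) (hγ : γ ≠ 0) (x : FA) :
    rho (m := m) hq0 hβ hγ (RingQuot.mkAlgHom ℂ (URel q (fm q m)) x)
      = FreeAlgebra.lift ℂ (gens q β γ m) x := by
  rw [rho, RingQuot.liftAlgHom_mkAlgHom_apply]

lemma rho_E (hq0 : q ≠ 0) (hβ : β ≠ 0) (hγ : γ ≠ 0) :
    rho (m := m) hq0 hβ hγ E! = Eop q β γ m := by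
  rw [uE, rho_mk, gE, FreeAlgebra.lift_ι_apply]; rfl

lemma rho_F (hq0 : q ≠ 0) (hβ : β ≠ 0) (hγ : γ ≠ 0) :
    rho (m := m) hq0 hβ hγ F! = Fop := by
  rw [uF, rho_mk, gF, FreeAlgebra.lift_ι_apply]; rfl

lemma rho_K (hq0 : q ≠ 0) (hβ : β ≠ 0) (hγ : γ ≠ 0) :
    rho (m := m) hq0 hβ hγ K! = diag (lk q β) := by
  rw [uK, rho_mk, gK, FreeAlgebra.lift_ι_apply]; rfl

lemma rho_H (hq0 : q ≠ 0) (hβ : β ≠ 0) (hγ : γ ≠ 0) :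
    rho (m := m) hq0 hβ hγ H! = diag (lh q γ) := by
  rw [uH, rho_mk, gH, FreeAlgebra.lift_ι_apply]; rfl

lemma rho_Fpow_v0 (hq0 : q ≠ 0) (hβ : β ≠ 0) (hγ : γ ≠ 0) (i : ℕ) :
    rho (m := m) hq0 hβ hγ (F! ^ i) v0 = Finsupp.single i 1 := by
  induction i with
  | zero => simp [v0]
  | succ n ih =>
    rw [pow_succ', map_mul, Module.End.mul_apply, ih, rho_F]
    exact Fop_single n 1

lemma rho_P_zero (hq0 : q ≠ 0) (hβ : β ≠ 0) (hγ : γ ≠ 0)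
    (hα : α = (β ^ m - γ ^ m) / (q - q⁻¹)) :
    ∀ u ∈ P1inf q m α β γ, rho (m := m) hq0 hβ hγ u v0 = 0 := by
  intro u hu
  induction hu using Submodule.span_induction with
  | mem x hx =>
    simp only [Set.mem_insert_iff, Set.mem_singleton_iff] at hx
    rcases hx with rfl | rfl | rfl | rfl
    · rw [map_sub, map_mul, rho_E, rho_F, AlgHom.commutes, LinearMap.sub_apply, Module.End.mul_apply]
      show Eop q β γ m (Fop v0) - algebraMap ℂ (Module.End ℂ V) α v0 = 0
      rw [Module.algebraMap_end_apply]
      have : Fop v0 = Finsupp.single 1 1 := Fop_single 0 1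
      rw [this, Eop_single_succ]
      have hcc : cc q β γ m 1 = α := by
        rw [cc_succ, hα]
        simp only [cc, dd, lk, lh, zero_add, pow_zero, mul_one, mul_zero, div_eq_mul_inv]
        ring
      rw [hcc, v0]
      simp
    · rw [map_sub, rho_K, AlgHom.commutes, LinearMap.sub_apply]
      show diag (lk q β) v0 - algebraMap ℂ (Module.End ℂ V) β v0 = 0
      rw [Module.algebraMap_end_apply, v0, diag_single]
      simp [lk]
    · rw [map_sub, rho_H, AlgHom.commutes, LinearMap.sub_apply]
      show diag (lh q γ) v0 - algebraMap ℂ (Module.End ℂ V) γ v0 = 0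
      rw [Module.algebraMap_end_apply, v0, diag_single]
      simp [lh]
    · rw [rho_E, v0, Eop_single_zero]
  | zero => simp
  | add x y hx hy ihx ihy => rw [map_add, LinearMap.add_apply, ihx, ihy, add_zero]
  | smul a x hx ih =>
    rw [smul_eq_mul, map_mul, Module.End.mul_apply, ih, map_zero]

end evsec
end
end Stmt3Aux
namespace Stmt3Aux
noncomputable section
section struct
variable {q α β γ : ℂ} {m : ℕ}

local notation "E!" => uE q (fm q m)
local notation "F!" => uF q (fm q m)
local notation "K!" => uK q (fm q m)
local notation "P!" => P1inf q m α β γ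
end struct

/-- The complex subspace spanned by powers of `F` together with `P`. -/
def SS (q α β γ : ℂ) (m : ℕ) : Submodule ℂ (Um q m) :=
  Submodule.span ℂ (Set.range fun i : ℕ => uF q (fm q m) ^ i)
    ⊔ (P1inf q m α β γ).restrictScalars ℂ

section struct
variable {q α β γ : ℂ} {m : ℕ}

local notation "E!" => uE q (fm q m)
local notation "F!" => uF q (fm q m)
local notation "K!" => uK q (fm q m)
local notation "P!" => P1inf q m α β γ
local notation "S!" => SS q α β γ m

lemma mem_SS_span {x : Um q m}
    (hx : x ∈ Submodule.span ℂ (Set.range fun i : ℕ => uF q (fm q m) ^ i)) : x ∈ S! :=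
  Submodule.mem_sup_left hx

lemma memS_P {x : Um q m} (hx : x ∈ P!) : (x : Um q m) ∈ S! :=
  Submodule.mem_sup_right hx

lemma memS_pow (i : ℕ) : (F! ^ i : Um q m) ∈ S! :=
  mem_SS_span (Submodule.subset_span ⟨i, rfl⟩)

lemma memS_of_sub {x y : Um q m} (h1 : x - y ∈ P!) (h2 : y ∈ S!) : x ∈ S! := by
  have hxy : x = (x - y) + y := (sub_add_cancel x y).symm
  rw [hxy]
  exact add_mem (memS_P h1) h2

lemma span_top (hq0 : q ≠ 0) (hβ : β ≠ 0) (hγ : γ ≠ 0) (u : Um q m) : u ∈ S! := by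
  have main : ∀ a : FA, ∀ v ∈ S!, RingQuot.mkAlgHom ℂ (URel q (fm q m)) a * v ∈ S! := by
    intro a
    induction a using FreeAlgebra.induction with
    | grade0 r =>
      intro v hv
      rw [AlgHom.commutes, ← Algebra.smul_def]
      exact Submodule.smul_mem _ _ hv
    | mul a b iha ihb =>
      intro v hv
      rw [map_mul, mul_assoc]
      exact iha _ (ihb _ hv)
    | add a b iha ihb =>
      intro v hv
      rw [map_add, add_mul]
      exact add_mem (iha v hv) (ihb v hv)
    | grade1 g =>
      intro v hv
      obtain ⟨v1, hv1, v2, hv2, rfl⟩ := Submodule.mem_sup.mp hv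
      rw [mul_add]
      refine add_mem ?_ (memS_P ?_)
      · clear hv
        induction hv1 using Submodule.span_induction with
        | mem x hx =>
          obtain ⟨i, rfl⟩ := hx
          beta_reduce
          cases g with
          | E =>
            have hEE : RingQuot.mkAlgHom ℂ (URel q (fm q m)) (FreeAlgebra.ι ℂ Gen.E) = E! := rfl
            rw [hEE]
            cases i with
            | zero =>
              rw [pow_zero, mul_one]
              exact memS_P (pEgen q α β γ m)
            | succ n =>
              exact memS_of_sub (pEFS n) (Submodule.smul_mem _ _ (memS_pow n))
          | F =>
            have hFF : RingQuot.mkAlgHom ℂ (URel q (fm q m)) (FreeAlgebra.ι ℂ Gen.F) = F! := rfl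
            rw [hFF, ← pow_succ']
            exact memS_pow (i + 1)
          | K =>
            have hKK : RingQuot.mkAlgHom ℂ (URel q (fm q m)) (FreeAlgebra.ι ℂ Gen.K) = K! := rfl
            rw [hKK]
            exact memS_of_sub (pXF (rel_KF q m) (pKgen q α β γ m) i)
              (Submodule.smul_mem _ _ (memS_pow i))
          | Kinv =>
            have hh : RingQuot.mkAlgHom ℂ (URel q (fm q m)) (FreeAlgebra.ι ℂ Gen.Kinv)
                = uKi q (fm q m) := rfl
            rw [hh]
            exact memS_of_sub (pXF (rel_KiF q m hq0) (pKigen hβ) i)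
              (Submodule.smul_mem _ _ (memS_pow i))
          | H =>
            have hh : RingQuot.mkAlgHom ℂ (URel q (fm q m)) (FreeAlgebra.ι ℂ Gen.H)
                = uH q (fm q m) := rfl
            rw [hh]
            exact memS_of_sub (pXF (rel_HF q m) (pHgen q α β γ m) i)
              (Submodule.smul_mem _ _ (memS_pow i))
          | Hinv =>
            have hh : RingQuot.mkAlgHom ℂ (URel q (fm q m)) (FreeAlgebra.ι ℂ Gen.Hinv)
                = uHi q (fm q m) := rfl
            rw [hh]
            exact memS_of_sub (pXF (rel_HiF q m hq0) (pHigen hγ) i)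
              (Submodule.smul_mem _ _ (memS_pow i))
        | zero => rw [mul_zero]; exact zero_mem _
        | add x y hx hy ihx ihy => rw [mul_add]; exact add_mem ihx ihy
        | smul c x hx ih => rw [mul_smul_comm]; exact Submodule.smul_mem _ _ ih
      · have hv2' : v2 ∈ P! := hv2
        have := Submodule.smul_mem P! (RingQuot.mkAlgHom ℂ (URel q (fm q m)) (FreeAlgebra.ι ℂ g)) hv2'
        rwa [smul_eq_mul] at this
  obtain ⟨a, rfl⟩ := RingQuot.mkAlgHom_surjective ℂ _ u
  have h1 : (1 : Um q m) ∈ S! := by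
    have := memS_pow (q := q) (α := α) (β := β) (γ := γ) (m := m) 0
    rwa [pow_zero] at this
  have := main a 1 h1
  rwa [mul_one] at this

lemma descend (hcc : ∀ n : ℕ, cc q β γ m (n + 1) ≠ 0)
    {N : Submodule (Um q m) (Um q m)} (hPN : P! ≤ N) :
    ∀ i : ℕ, F! ^ i ∈ N → (1 : Um q m) ∈ N := by
  intro i
  induction i with
  | zero => intro h; rwa [pow_zero] at h
  | succ n ih =>
    intro h
    have h1 : E! * F! ^ (n + 1) ∈ N := by
      have := N.smul_mem E! h
      rwa [smul_eq_mul] at this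
    have h2 : cc q β γ m (n + 1) • F! ^ n ∈ N := by
      have h3 := hPN (pEFS (q := q) (α := α) (β := β) (γ := γ) n)
      have h4 : cc q β γ m (n + 1) • F! ^ n
          = E! * F! ^ (n + 1) - (E! * F! ^ (n + 1) - cc q β γ m (n + 1) • F! ^ n) :=
        (sub_sub_cancel _ _).symm
      rw [h4]
      exact sub_mem h1 h3
    have h5 := Submodule.smul_of_tower_mem N (cc q β γ m (n + 1))⁻¹ h2
    rw [inv_smul_smul₀ (hcc n)] at h5
    exact ih h5

lemma lagrange (hq0 : q ≠ 0) (hq : ∀ n : ℕ, 0 < n → q ^ n ≠ 1) (hβ : β ≠ 0)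
    {N : Submodule (Um q m) (Um q m)} (hPN : P! ≤ N) :
    ∀ k : ℕ, ∀ T : Finset ℕ, ∀ a : ℕ → ℂ, T.card ≤ k →
      (∃ j ∈ T, a j ≠ 0) → (∑ i ∈ T, a i • F! ^ i) ∈ N → ∃ i : ℕ, F! ^ i ∈ N := by
  intro k
  induction k with
  | zero =>
    rintro T a hcard ⟨j, hj, -⟩ -
    rw [Nat.le_zero, Finset.card_eq_zero] at hcard
    exact absurd (hcard ▸ hj) (Finset.notMem_empty j)
  | succ k ih =>
    rintro T a hcard ⟨j0, hj0, haj0⟩ hsum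
    by_cases hone : ∀ jj ∈ T, jj ≠ j0 → a jj = 0
    · have hx : ∑ i ∈ T, a i • F! ^ i = a j0 • F! ^ j0 :=
        Finset.sum_eq_single_of_mem j0 hj0 (fun b hb hne => by rw [hone b hb hne, zero_smul])
      refine ⟨j0, ?_⟩
      have h5 := Submodule.smul_of_tower_mem N (a j0)⁻¹ hsum
      rw [hx, inv_smul_smul₀ haj0] at h5
      exact h5
    · push_neg at hone
      obtain ⟨j1, hj1T, hj1ne, hj1a⟩ := hone
      have hK : K! * (∑ i ∈ T, a i • F! ^ i) ∈ N := by
        have := N.smul_mem K! hsum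
        rwa [smul_eq_mul] at this
      have hdiff : K! * (∑ i ∈ T, a i • F! ^ i) - ∑ i ∈ T, (lk q β i * a i) • F! ^ i ∈ P! := by
        rw [Finset.mul_sum, ← Finset.sum_sub_distrib]
        refine Submodule.sum_mem _ fun i hiT => ?_
        have hp := pXF (rel_KF q m) (pKgen q α β γ m) i
        have hsc : lk q β i * a i = a i * (((q ^ 2)⁻¹) ^ i * β) := by
          simp only [lk]; ring
        have heq : K! * (a i • F! ^ i) - (lk q β i * a i) • F! ^ i
            = a i • (K! * F! ^ i - (((q ^ 2)⁻¹) ^ i * β) • F! ^ i) := by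
          rw [mul_smul_comm, smul_sub, smul_smul, hsc]
        rw [heq]
        exact Submodule.smul_of_tower_mem _ _ hp
      have hy : (∑ i ∈ T, (lk q β i * a i) • F! ^ i) ∈ N := by
        have h6 : (∑ i ∈ T, (lk q β i * a i) • F! ^ i)
            = K! * (∑ i ∈ T, a i • F! ^ i)
              - (K! * (∑ i ∈ T, a i • F! ^ i) - ∑ i ∈ T, (lk q β i * a i) • F! ^ i) :=
          (sub_sub_cancel _ _).symm
        rw [h6]
        exact sub_mem hK (hPN hdiff)
      have hz : (∑ i ∈ T, ((lk q β i - lk q β j0) * a i) • F! ^ i) ∈ N := by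
        have h6 : ∑ i ∈ T, ((lk q β i - lk q β j0) * a i) • F! ^ i
            = (∑ i ∈ T, (lk q β i * a i) • F! ^ i) - lk q β j0 • ∑ i ∈ T, a i • F! ^ i := by
          rw [Finset.smul_sum, ← Finset.sum_sub_distrib]
          refine Finset.sum_congr rfl fun i _ => ?_
          module
        rw [h6]
        exact sub_mem hy (Submodule.smul_of_tower_mem _ _ hsum)
      have hterm : ((lk q β j0 - lk q β j0) * a j0) • F! ^ j0 = 0 := by
        rw [sub_self, zero_mul, zero_smul]
      have hz' : (∑ i ∈ T.erase j0, ((lk q β i - lk q β j0) * a i) • F! ^ i) ∈ N := by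
        rw [Finset.sum_erase T hterm]
        exact hz
      refine ih (T.erase j0) (fun i => (lk q β i - lk q β j0) * a i) ?_
        ⟨j1, Finset.mem_erase.mpr ⟨hj1ne, hj1T⟩, ?_⟩ hz'
      · have := Finset.card_erase_of_mem hj0
        omega
      · exact mul_ne_zero (sub_ne_zero_of_ne fun h => hj1ne (lk_inj hq0 hq hβ h)) hj1a

end struct
end
end Stmt3Aux

open Stmt3Aux

/-- If `α = (β^m - γ^m)/(q - q⁻¹)` and `(β/γ)^m ≠ q^{2mn}` for every
`n ≥ 0`, then `U/P_{1,∞}` is an infinite-dimensional irreducible representation of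
`U = U_q(f_m(K,H))`. -/
theorem stmt3 (q : ℂ) (hq0 : q ≠ 0) (hq : ∀ n : ℕ, 0 < n → q ^ n ≠ 1)
    (m : ℕ) (hm : 1 ≤ m) (α β γ : ℂ) (hβ : β ≠ 0) (hγ : γ ≠ 0)
    (hα : α = (β ^ m - γ ^ m) / (q - q⁻¹))
    (hn : ∀ n : ℕ, (β / γ) ^ m ≠ q ^ (2 * m * n)) :
    ¬ FiniteDimensional ℂ (Um q m ⧸ P1inf q m α β γ) ∧
    IsSimpleModule (Um q m) (Um q m ⧸ P1inf q m α β γ) := by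
  classical
  have hcc : ∀ n : ℕ, cc q β γ m (n + 1) ≠ 0 := cc_ne hq0 hq hm hγ hn
  constructor
  · -- infinite-dimensional
    intro hFD
    have hli : LinearIndependent ℂ
        (fun i : ℕ => Submodule.Quotient.mk (p := P1inf q m α β γ) (uF q (fm q m) ^ i)) := by
      rw [linearIndependent_iff']
      intro s g hsum i hi
      have h1 : Submodule.Quotient.mk (p := P1inf q m α β γ) (∑ j ∈ s, g j • uF q (fm q m) ^ j)
          = ∑ j ∈ s, g j • Submodule.Quotient.mk (p := P1inf q m α β γ) (uF q (fm q m) ^ j) := by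
        rw [← Submodule.mkQ_apply, map_sum]
        simp [Submodule.mkQ_apply, Submodule.Quotient.mk_smul]
      have hmem : (∑ j ∈ s, g j • uF q (fm q m) ^ j) ∈ P1inf q m α β γ := by
        rw [← Submodule.Quotient.mk_eq_zero, h1, hsum]
      have h2 := rho_P_zero hq0 hβ hγ hα _ hmem
      rw [map_sum] at h2
      have h3 : (∑ j ∈ s, g j • Finsupp.single j (1 : ℂ)) = 0 := by
        rw [← h2]
        rw [LinearMap.coe_sum, Finset.sum_apply]
        refine Finset.sum_congr rfl fun j _ => ?_
        rw [map_smul, LinearMap.smul_apply, rho_Fpow_v0]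
      have hb := (Finsupp.basisSingleOne (R := ℂ) (ι := ℕ)).linearIndependent
      rw [linearIndependent_iff'] at hb
      have := hb s g ?_ i hi
      · exact this
      · simpa [Finsupp.basisSingleOne] using h3
    exact Module.Finite.not_linearIndependent_of_infinite _ hli
  · -- simple
    rw [isSimpleModule_iff_isCoatom]
    constructor
    · intro htop
      have h1 : (1 : Um q m) ∈ P1inf q m α β γ := htop ▸ Submodule.mem_top
      have h2 := rho_P_zero hq0 hβ hγ hα 1 h1
      rw [map_one, Module.End.one_apply] at h2
      exact one_ne_zero (Finsupp.single_eq_zero.mp h2)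
    · intro N hPN
      obtain ⟨u, huN, huP⟩ := SetLike.exists_of_lt hPN
      have hspan : u ∈ SS q α β γ m := span_top hq0 hβ hγ u
      obtain ⟨v1, hv1, v2, hv2, hsum⟩ := Submodule.mem_sup.mp hspan
      have hv2P : v2 ∈ P1inf q m α β γ := hv2
      have hv1N : v1 ∈ N := by
        have he : v1 = u - v2 := eq_sub_of_add_eq hsum
        rw [he]
        exact sub_mem huN (le_of_lt hPN hv2P)
      have hv1P : v1 ∉ P1inf q m α β γ := fun h => huP (by rw [← hsum]; exact add_mem h hv2P)
      rw [Finsupp.mem_span_range_iff_exists_finsupp] at hv1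
      obtain ⟨c, hc⟩ := hv1
      rw [Finsupp.sum] at hc
      have hcne : c ≠ 0 := by
        rintro rfl
        apply hv1P
        rw [← hc]
        simp
      obtain ⟨j, hjsup⟩ := Finsupp.support_nonempty_iff.mpr hcne
      obtain ⟨i0, hF⟩ := lagrange hq0 hq hβ (le_of_lt hPN) c.support.card c.support c le_rfl
        ⟨j, hjsup, Finsupp.mem_support_iff.mp hjsup⟩ (hc ▸ hv1N)
      have h1N := descend hcc (le_of_lt hPN) i0 hF
      rw [Submodule.eq_top_iff']
      intro x
      simpa using N.smul_mem x h1N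
end

section
/- Suppose α = 0 and for every integer n ≥ 1 one has (1/(q − q⁻¹))·(((1 − q^{2nm})/(1 − q^{2m}))·β^m − ((1 − q^{−2nm})/(1 − q^{−2m}))·γ^m) ≠ 0. Then the left U-module U/P_{∞,1}, where P_{∞,1} = U(EF − α) + U(K − β) + U(H − γ) + UF, is an infinite-dimensional irreducible (simple) representation of U. -/
set_option synthInstance.maxHeartbeats 1000000
set_option maxHeartbeats 1000000

namespace Stmt4Aux

noncomputable section
open Finsupp

abbrev V : Type := ℕ →₀ ℂ

def cc (q β γ : ℂ) (m : ℕ) : ℕ → ℂ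
  | 0 => 0
  | n+1 => cc q β γ m n - (q - q⁻¹)⁻¹ * ((q^(2*n)*β)^m - ((q^(2*n))⁻¹*γ)^m)

def dop (d : ℕ → ℂ) : V →ₗ[ℂ] V := Finsupp.lsum ℂ fun n => d n • Finsupp.lsingle n
def Eop : V →ₗ[ℂ] V := Finsupp.lsum ℂ fun n => Finsupp.lsingle (n+1)
def Fop (q β γ : ℂ) (m : ℕ) : V →ₗ[ℂ] V :=
  Finsupp.lsum ℂ fun n => cc q β γ m n • Finsupp.lsingle (n-1)

@[simp] lemma dop_single (d : ℕ → ℂ) (n : ℕ) (a : ℂ) :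
    dop d (single n a) = single n (d n * a) := by
  simp [dop, Finsupp.lsum_single, Finsupp.smul_single']

@[simp] lemma Eop_single (n : ℕ) (a : ℂ) : Eop (single n a) = single (n+1) a := by
  simp [Eop, Finsupp.lsum_single]

@[simp] lemma Fop_single (q β γ : ℂ) (m : ℕ) (n : ℕ) (a : ℂ) :
    Fop q β γ m (single n a) = single (n-1) (cc q β γ m n * a) := by
  simp [Fop, Finsupp.lsum_single, Finsupp.smul_single']

@[simp] lemma dop_pow_single (d : ℕ → ℂ) (k n : ℕ) (a : ℂ) :
    (dop d ^ k) (single n a) = single n (d n ^ k * a) := by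
  induction k with
  | zero => simp
  | succ k ih =>
    rw [pow_succ', Module.End.mul_apply, ih, dop_single]
    congr 1; ring

@[simp] lemma Eop_pow_single (k n : ℕ) (a : ℂ) :
    (Eop ^ k) (single n a) = single (n + k) a := by
  induction k with
  | zero => simp
  | succ k ih =>
    rw [pow_succ', Module.End.mul_apply, ih, Eop_single, Nat.add_assoc]

def gens (q β γ : ℂ) (m : ℕ) : Gen → Module.End ℂ V
  | .E => Eop
  | .F => Fop q β γ m
  | .K => dop (fun n => q^(2*n)*β)
  | .Kinv => dop (fun n => (q^(2*n)*β)⁻¹)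
  | .H => dop (fun n => (q^(2*n))⁻¹*γ)
  | .Hinv => dop (fun n => q^(2*n)*γ⁻¹)

def rho (q β γ : ℂ) (m : ℕ) : FA →ₐ[ℂ] Module.End ℂ V := FreeAlgebra.lift ℂ (gens q β γ m)

@[simp] lemma rho_gE : rho q β γ m gE = Eop := by simp [rho, gens, gE]
@[simp] lemma rho_gF : rho q β γ m gF = Fop q β γ m := by simp [rho, gens, gF]
@[simp] lemma rho_gK : rho q β γ m gK = dop (fun n => q^(2*n)*β) := by simp [rho, gens, gK]
@[simp] lemma rho_gKi : rho q β γ m gKi = dop (fun n => (q^(2*n)*β)⁻¹) := by simp [rho, gens, gKi]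
@[simp] lemma rho_gH : rho q β γ m gH = dop (fun n => (q^(2*n))⁻¹*γ) := by simp [rho, gens, gH]
@[simp] lemma rho_gHi : rho q β γ m gHi = dop (fun n => q^(2*n)*γ⁻¹) := by simp [rho, gens, gHi]

lemma pow2succ (q : ℂ) (n : ℕ) : q ^ (2*(n+1)) = q ^ (2*n) * q ^ 2 := by
  rw [show 2*(n+1) = 2*n+2 from by ring, pow_add]

theorem rho_rel {q β γ : ℂ} {m : ℕ} (hq0 : q ≠ 0) (hβ : β ≠ 0) (hγ : γ ≠ 0)
    {x y : FA} (h : URel q (fm q m) x y) : rho q β γ m x = rho q β γ m y := by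
  have hqn : ∀ n : ℕ, q ^ n ≠ 0 := fun n => pow_ne_zero n hq0
  induction h with
  | KKi =>
    rw [map_mul, map_one, rho_gK, rho_gKi]
    apply Finsupp.lhom_ext; intro n a
    rw [Module.End.mul_apply, dop_single, dop_single, Module.End.one_apply]
    congr 1
    field_simp
  | KiK =>
    rw [map_mul, map_one, rho_gK, rho_gKi]
    apply Finsupp.lhom_ext; intro n a
    rw [Module.End.mul_apply, dop_single, dop_single, Module.End.one_apply]
    congr 1
    field_simp
  | HHi =>
    rw [map_mul, map_one, rho_gH, rho_gHi]
    apply Finsupp.lhom_ext; intro n a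
    rw [Module.End.mul_apply, dop_single, dop_single, Module.End.one_apply]
    congr 1
    field_simp
  | HiH =>
    rw [map_mul, map_one, rho_gH, rho_gHi]
    apply Finsupp.lhom_ext; intro n a
    rw [Module.End.mul_apply, dop_single, dop_single, Module.End.one_apply]
    congr 1
    field_simp
  | KH =>
    rw [map_mul, map_mul, rho_gK, rho_gH]
    apply Finsupp.lhom_ext; intro n a
    rw [Module.End.mul_apply, Module.End.mul_apply, dop_single, dop_single,
      dop_single, dop_single]
    congr 1; ring
  | KE =>
    rw [map_mul, map_smul, map_mul, rho_gK, rho_gE]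
    apply Finsupp.lhom_ext; intro n a
    rw [Module.End.mul_apply, LinearMap.smul_apply, Module.End.mul_apply,
      Eop_single, dop_single, dop_single, Eop_single, Finsupp.smul_single']
    congr 1
    rw [pow2succ]; ring
  | KF =>
    rw [map_mul, map_smul, map_mul, rho_gK, rho_gF]
    apply Finsupp.lhom_ext; intro n a
    rw [Module.End.mul_apply, LinearMap.smul_apply, Module.End.mul_apply,
      Fop_single, dop_single, dop_single, Fop_single, Finsupp.smul_single']
    congr 1
    cases n with
    | zero => simp [cc]
    | succ n =>
      simp only [Nat.add_sub_cancel]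
      rw [pow2succ]
      field_simp
  | HE =>
    rw [map_mul, map_smul, map_mul, rho_gH, rho_gE]
    apply Finsupp.lhom_ext; intro n a
    rw [Module.End.mul_apply, LinearMap.smul_apply, Module.End.mul_apply,
      Eop_single, dop_single, dop_single, Eop_single, Finsupp.smul_single']
    congr 1
    rw [pow2succ, mul_inv]
    field_simp
  | HF =>
    rw [map_mul, map_smul, map_mul, rho_gH, rho_gF]
    apply Finsupp.lhom_ext; intro n a
    rw [Module.End.mul_apply, LinearMap.smul_apply, Module.End.mul_apply,
      Fop_single, dop_single, dop_single, Fop_single, Finsupp.smul_single']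
    congr 1
    cases n with
    | zero => simp [cc]
    | succ n =>
      simp only [Nat.add_sub_cancel]
      rw [pow2succ]
      field_simp
  | EF =>
    rw [map_sub, map_mul, map_mul, rho_gE, rho_gF]
    rw [show fm q m = (q - q⁻¹)⁻¹ • (gK ^ m - gH ^ m) from rfl]
    rw [map_smul, map_sub, map_pow, map_pow, rho_gK, rho_gH]
    apply Finsupp.lhom_ext; intro n a
    rw [LinearMap.sub_apply, Module.End.mul_apply, Module.End.mul_apply,
      LinearMap.smul_apply, LinearMap.sub_apply, dop_pow_single, dop_pow_single,
      Eop_single, Fop_single, Fop_single, Eop_single]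
    cases n with
    | zero =>
      rw [show cc q β γ m 0 = 0 from rfl, zero_mul, Finsupp.single_zero, zero_sub]
      rw [smul_sub, Finsupp.smul_single, Finsupp.smul_single, ← Finsupp.single_sub,
        ← Finsupp.single_neg]
      congr 1
      rw [show cc q β γ m 1 = 0
            - (q - q⁻¹)⁻¹ * ((q^(2*0)*β)^m - ((q^(2*0))⁻¹*γ)^m) from rfl]
      simp only [smul_eq_mul]
      ring
    | succ n =>
      simp only [Nat.add_sub_cancel]
      rw [smul_sub, Finsupp.smul_single, Finsupp.smul_single, ← Finsupp.single_sub,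
        ← Finsupp.single_sub]
      congr 1
      rw [show cc q β γ m (n+1+1) = cc q β γ m (n+1)
            - (q - q⁻¹)⁻¹ * ((q^(2*(n+1))*β)^m - ((q^(2*(n+1)))⁻¹*γ)^m) from rfl]
      simp only [smul_eq_mul]
      ring

/-! ### Relations in `Um` -/

def mkU (q : ℂ) (m : ℕ) : FA →ₐ[ℂ] Um q m := RingQuot.mkAlgHom ℂ (URel q (fm q m))

lemma mk_rel {q : ℂ} {m : ℕ} {x y : FA} (h : URel q (fm q m) x y) :
    mkU q m x = mkU q m y := RingQuot.mkAlgHom_rel ℂ h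

variable (q β γ : ℂ) (m : ℕ)

lemma uE_eq : uE q (fm q m) = mkU q m gE := rfl
lemma uF_eq : uF q (fm q m) = mkU q m gF := rfl
lemma uK_eq : uK q (fm q m) = mkU q m gK := rfl
lemma uKi_eq : uKi q (fm q m) = mkU q m gKi := rfl
lemma uH_eq : uH q (fm q m) = mkU q m gH := rfl
lemma uHi_eq : uHi q (fm q m) = mkU q m gHi := rfl

lemma rKKi : uK q (fm q m) * uKi q (fm q m) = 1 := by
  have h := mk_rel (q := q) (m := m) URel.KKi
  simpa only [map_mul, map_one, uK_eq, uKi_eq] using h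

lemma rKiK : uKi q (fm q m) * uK q (fm q m) = 1 := by
  have h := mk_rel (q := q) (m := m) URel.KiK
  simpa only [map_mul, map_one, uK_eq, uKi_eq] using h

lemma rHHi : uH q (fm q m) * uHi q (fm q m) = 1 := by
  have h := mk_rel (q := q) (m := m) URel.HHi
  simpa only [map_mul, map_one, uH_eq, uHi_eq] using h

lemma rHiH : uHi q (fm q m) * uH q (fm q m) = 1 := by
  have h := mk_rel (q := q) (m := m) URel.HiH
  simpa only [map_mul, map_one, uH_eq, uHi_eq] using h

lemma rKE : uK q (fm q m) * uE q (fm q m) = q^2 • (uE q (fm q m) * uK q (fm q m)) := by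
  have h := mk_rel (q := q) (m := m) URel.KE
  simpa only [map_mul, map_smul, uK_eq, uE_eq] using h

lemma rHE : uH q (fm q m) * uE q (fm q m) = (q^2)⁻¹ • (uE q (fm q m) * uH q (fm q m)) := by
  have h := mk_rel (q := q) (m := m) URel.HE
  simpa only [map_mul, map_smul, uH_eq, uE_eq] using h

lemma rEF : uE q (fm q m) * uF q (fm q m) - uF q (fm q m) * uE q (fm q m)
    = (q - q⁻¹)⁻¹ • (uK q (fm q m) ^ m - uH q (fm q m) ^ m) := by
  have h := mk_rel (q := q) (m := m) URel.EF
  have h2 : mkU q m (fm q m) = (q - q⁻¹)⁻¹ • (mkU q m gK ^ m - mkU q m gH ^ m) := by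
    show mkU q m ((q - q⁻¹)⁻¹ • (gK ^ m - gH ^ m)) = _
    rw [map_smul, map_sub, map_pow, map_pow]
  rw [uE_eq, uF_eq, uK_eq, uH_eq, ← h2]
  simpa only [map_sub, map_mul] using h

section comm

variable {A : Type*} [Ring A] [Algebra ℂ A]

lemma comm_pow_right {g e : A} {s : ℂ} (h : g * e = s • (e * g)) (n : ℕ) :
    g * e ^ n = s ^ n • (e ^ n * g) := by
  induction n with
  | zero => simp
  | succ n ih =>
    rw [pow_succ', ← mul_assoc, h, smul_mul_assoc, mul_assoc, ih, mul_smul_comm,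
      ← mul_assoc, ← pow_succ', smul_smul, ← pow_succ']

lemma comm_pow_left {g e : A} {s : ℂ} (h : g * e = s • (e * g)) (k : ℕ) :
    g ^ k * e = s ^ k • (e * g ^ k) := by
  induction k with
  | zero => simp
  | succ k ih =>
    rw [pow_succ', mul_assoc, ih, mul_smul_comm, ← mul_assoc, h, smul_mul_assoc,
      smul_smul, mul_assoc, ← pow_succ', ← pow_succ]

end comm

lemma rKiE (hq0 : q ≠ 0) :
    uKi q (fm q m) * uE q (fm q m) = (q^2)⁻¹ • (uE q (fm q m) * uKi q (fm q m)) := by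
  have hq2 : (q^2 : ℂ) ≠ 0 := pow_ne_zero 2 hq0
  have h1 : uE q (fm q m) * uK q (fm q m)
      = (q^2)⁻¹ • (uK q (fm q m) * uE q (fm q m)) := by
    rw [rKE, inv_smul_smul₀ hq2]
  calc uKi q (fm q m) * uE q (fm q m)
      = uKi q (fm q m) * uE q (fm q m) * (uK q (fm q m) * uKi q (fm q m)) := by
        rw [rKKi, mul_one]
    _ = uKi q (fm q m) * (uE q (fm q m) * uK q (fm q m)) * uKi q (fm q m) := by
        noncomm_ring
    _ = (q^2)⁻¹ • (uKi q (fm q m) * uK q (fm q m) * (uE q (fm q m) * uKi q (fm q m))) := by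
        rw [h1, mul_smul_comm, smul_mul_assoc]; congr 1; noncomm_ring
    _ = (q^2)⁻¹ • (uE q (fm q m) * uKi q (fm q m)) := by rw [rKiK, one_mul]

lemma rHiE (hq0 : q ≠ 0) :
    uHi q (fm q m) * uE q (fm q m) = q^2 • (uE q (fm q m) * uHi q (fm q m)) := by
  have hq2 : ((q^2)⁻¹ : ℂ) ≠ 0 := inv_ne_zero (pow_ne_zero 2 hq0)
  have h1 : uE q (fm q m) * uH q (fm q m)
      = q^2 • (uH q (fm q m) * uE q (fm q m)) := by
    rw [rHE, smul_smul, mul_inv_cancel₀ (pow_ne_zero 2 hq0), one_smul]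
  calc uHi q (fm q m) * uE q (fm q m)
      = uHi q (fm q m) * uE q (fm q m) * (uH q (fm q m) * uHi q (fm q m)) := by
        rw [rHHi, mul_one]
    _ = uHi q (fm q m) * (uE q (fm q m) * uH q (fm q m)) * uHi q (fm q m) := by
        noncomm_ring
    _ = q^2 • (uHi q (fm q m) * uH q (fm q m) * (uE q (fm q m) * uHi q (fm q m))) := by
        rw [h1, mul_smul_comm, smul_mul_assoc]; congr 1; noncomm_ring
    _ = q^2 • (uE q (fm q m) * uHi q (fm q m)) := by rw [rHiH, one_mul]

/-! ### The subspace `S = P + span{E^n}` and the spanning argument -/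

def Epow (q : ℂ) (m : ℕ) (n : ℕ) : Um q m := uE q (fm q m) ^ n

def SS (q : ℂ) (m : ℕ) (α β γ : ℂ) : Submodule ℂ (Um q m) :=
  (Pinf1 q m α β γ).restrictScalars ℂ ⊔ Submodule.span ℂ (Set.range (Epow q m))

variable (α : ℂ)

lemma P_le_SS {x : Um q m} (hx : x ∈ Pinf1 q m α β γ) : x ∈ SS q m α β γ :=
  Submodule.mem_sup_left hx

lemma Epow_mem_SS (n : ℕ) : Epow q m n ∈ SS q m α β γ :=
  Submodule.mem_sup_right (Submodule.subset_span ⟨n, rfl⟩)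

lemma uK_mem_P : uK q (fm q m) - algebraMap ℂ (Um q m) β ∈ Pinf1 q m α β γ :=
  Submodule.subset_span (by simp [Set.mem_insert_iff])

lemma uH_mem_P : uH q (fm q m) - algebraMap ℂ (Um q m) γ ∈ Pinf1 q m α β γ :=
  Submodule.subset_span (by simp [Set.mem_insert_iff])

lemma uF_mem_P : uF q (fm q m) ∈ Pinf1 q m α β γ :=
  Submodule.subset_span (by simp [Set.mem_insert_iff])

lemma mul_K_mem_P (y : Um q m) :
    y * (uK q (fm q m) - algebraMap ℂ (Um q m) β) ∈ Pinf1 q m α β γ :=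
  (Pinf1 q m α β γ).smul_mem y (uK_mem_P q β γ m α)

lemma mul_H_mem_P (y : Um q m) :
    y * (uH q (fm q m) - algebraMap ℂ (Um q m) γ) ∈ Pinf1 q m α β γ :=
  (Pinf1 q m α β γ).smul_mem y (uH_mem_P q β γ m α)

lemma mul_algebraMap (y : Um q m) (c : ℂ) : y * algebraMap ℂ (Um q m) c = c • y := by
  rw [← Algebra.commutes, ← Algebra.smul_def]

/-- A diagonal-type generator times `E^n` stays in `S`. -/
lemma diag_mul_Epow_mem
    {g : Um q m} {s c : ℂ} (hc : c ≠ 0)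
    (hcomm : g * uE q (fm q m) = s • (uE q (fm q m) * g))
    (hg : c • g - 1 ∈ Pinf1 q m α β γ) (n : ℕ) :
    g * Epow q m n ∈ SS q m α β γ := by
  rw [Epow, comm_pow_right hcomm]
  apply Submodule.smul_mem
  have key : c • (uE q (fm q m) ^ n * g)
      = uE q (fm q m) ^ n * (c • g - 1) + Epow q m n := by
    rw [mul_sub, mul_one, mul_smul_comm, Epow]
    abel
  have h2 : c • (uE q (fm q m) ^ n * g) ∈ SS q m α β γ := by
    rw [key]
    exact Submodule.add_mem _
      (P_le_SS q β γ m α ((Pinf1 q m α β γ).smul_mem _ hg))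
      (Epow_mem_SS q β γ m α n)
  have := Submodule.smul_mem (SS q m α β γ) c⁻¹ h2
  rwa [smul_smul, inv_mul_cancel₀ hc, one_smul] at this

lemma smul_sub_one_eq (c : ℂ) (hc : c ≠ 0) (g : Um q m) :
    c⁻¹ • g - 1 = c⁻¹ • (g - algebraMap ℂ (Um q m) c) := by
  rw [smul_sub, Algebra.algebraMap_eq_smul_one, smul_smul, inv_mul_cancel₀ hc, one_smul]

lemma uE_mul_Epow (n : ℕ) : uE q (fm q m) * Epow q m n ∈ SS q m α β γ := by
  rw [show uE q (fm q m) * Epow q m n = Epow q m (n+1) from (pow_succ' _ _).symm]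
  exact Epow_mem_SS q β γ m α (n+1)

lemma uK_mul_Epow (hβ : β ≠ 0) (n : ℕ) :
    uK q (fm q m) * Epow q m n ∈ SS q m α β γ := by
  refine diag_mul_Epow_mem q β γ m α (c := β⁻¹) (inv_ne_zero hβ) (rKE q m) ?_ n
  rw [smul_sub_one_eq q m β hβ]
  exact (Pinf1 q m α β γ).smul_of_tower_mem β⁻¹ (uK_mem_P q β γ m α)

lemma uH_mul_Epow (hγ : γ ≠ 0) (n : ℕ) :
    uH q (fm q m) * Epow q m n ∈ SS q m α β γ := by
  refine diag_mul_Epow_mem q β γ m α (c := γ⁻¹) (inv_ne_zero hγ) (rHE q m) ?_ n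
  rw [smul_sub_one_eq q m γ hγ]
  exact (Pinf1 q m α β γ).smul_of_tower_mem γ⁻¹ (uH_mem_P q β γ m α)

lemma uKi_mul_Epow (hq0 : q ≠ 0) (hβ : β ≠ 0) (n : ℕ) :
    uKi q (fm q m) * Epow q m n ∈ SS q m α β γ := by
  refine diag_mul_Epow_mem q β γ m α (c := β) hβ (rKiE q m hq0) ?_ n
  have h1 : uKi q (fm q m) * (uK q (fm q m) - algebraMap ℂ (Um q m) β)
      = 1 - β • uKi q (fm q m) := by
    rw [mul_sub, rKiK, mul_algebraMap]
  have h2 : β • uKi q (fm q m) - 1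
      = -(uKi q (fm q m) * (uK q (fm q m) - algebraMap ℂ (Um q m) β)) := by
    rw [h1]; abel
  rw [h2]
  exact (Pinf1 q m α β γ).neg_mem (mul_K_mem_P q β γ m α _)

lemma uHi_mul_Epow (hq0 : q ≠ 0) (hγ : γ ≠ 0) (n : ℕ) :
    uHi q (fm q m) * Epow q m n ∈ SS q m α β γ := by
  refine diag_mul_Epow_mem q β γ m α (c := γ) hγ (rHiE q m hq0) ?_ n
  have h1 : uHi q (fm q m) * (uH q (fm q m) - algebraMap ℂ (Um q m) γ)
      = 1 - γ • uHi q (fm q m) := by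
    rw [mul_sub, rHiH, mul_algebraMap]
  have h2 : γ • uHi q (fm q m) - 1
      = -(uHi q (fm q m) * (uH q (fm q m) - algebraMap ℂ (Um q m) γ)) := by
    rw [h1]; abel
  rw [h2]
  exact (Pinf1 q m α β γ).neg_mem (mul_H_mem_P q β γ m α _)

lemma Kpow_sub_mem_P :
    uK q (fm q m) ^ m - algebraMap ℂ (Um q m) (β ^ m) ∈ Pinf1 q m α β γ := by
  have hc : Commute (uK q (fm q m)) (algebraMap ℂ (Um q m) β) :=
    (Algebra.commutes β (uK q (fm q m))).symm
  have h := hc.geom_sum₂_mul m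
  rw [map_pow]
  rw [← h]
  exact mul_K_mem_P q β γ m α _

lemma Hpow_sub_mem_P :
    uH q (fm q m) ^ m - algebraMap ℂ (Um q m) (γ ^ m) ∈ Pinf1 q m α β γ := by
  have hc : Commute (uH q (fm q m)) (algebraMap ℂ (Um q m) γ) :=
    (Algebra.commutes γ (uH q (fm q m))).symm
  have h := hc.geom_sum₂_mul m
  rw [map_pow]
  rw [← h]
  exact mul_H_mem_P q β γ m α _

lemma Kpow_mul_Epow (hβ : β ≠ 0) (n : ℕ) :
    uK q (fm q m) ^ m * Epow q m n ∈ SS q m α β γ := by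
  refine diag_mul_Epow_mem q β γ m α (c := (β ^ m)⁻¹)
    (inv_ne_zero (pow_ne_zero m hβ)) (comm_pow_left (rKE q m) m) ?_ n
  rw [smul_sub_one_eq q m (β ^ m) (pow_ne_zero m hβ)]
  exact (Pinf1 q m α β γ).smul_of_tower_mem _ (Kpow_sub_mem_P q β γ m α)

lemma Hpow_mul_Epow (hγ : γ ≠ 0) (n : ℕ) :
    uH q (fm q m) ^ m * Epow q m n ∈ SS q m α β γ := by
  refine diag_mul_Epow_mem q β γ m α (c := (γ ^ m)⁻¹)
    (inv_ne_zero (pow_ne_zero m hγ)) (comm_pow_left (rHE q m) m) ?_ n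
  rw [smul_sub_one_eq q m (γ ^ m) (pow_ne_zero m hγ)]
  exact (Pinf1 q m α β γ).smul_of_tower_mem _ (Hpow_sub_mem_P q β γ m α)

lemma gen_mul_SS {g : Um q m} (hg : ∀ n, g * Epow q m n ∈ SS q m α β γ) :
    ∀ s ∈ SS q m α β γ, g * s ∈ SS q m α β γ := by
  intro s hs
  rw [SS, Submodule.mem_sup] at hs
  obtain ⟨p, hp, w, hw, rfl⟩ := hs
  rw [mul_add]
  refine Submodule.add_mem _ (P_le_SS q β γ m α ((Pinf1 q m α β γ).smul_mem g hp)) ?_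
  induction hw using Submodule.span_induction with
  | mem x hx => obtain ⟨n, rfl⟩ := hx; exact hg n
  | zero => simp [Submodule.zero_mem]
  | add x y _ _ hx hy => rw [mul_add]; exact Submodule.add_mem _ hx hy
  | smul c x _ hx => rw [mul_smul_comm]; exact Submodule.smul_mem _ c hx

lemma uF_mul_Epow (hq0 : q ≠ 0) (hβ : β ≠ 0) (hγ : γ ≠ 0) (n : ℕ) :
    uF q (fm q m) * Epow q m n ∈ SS q m α β γ := by
  induction n with
  | zero =>
    simpa [Epow] using P_le_SS q β γ m α (uF_mem_P q β γ m α)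
  | succ n ih =>
    have hFE : uF q (fm q m) * uE q (fm q m)
        = uE q (fm q m) * uF q (fm q m)
          - (q - q⁻¹)⁻¹ • (uK q (fm q m) ^ m - uH q (fm q m) ^ m) := by
      rw [← rEF q m]; abel
    have step : uF q (fm q m) * Epow q m (n+1)
        = uE q (fm q m) * (uF q (fm q m) * Epow q m n)
          - ((q - q⁻¹)⁻¹ • (uK q (fm q m) ^ m - uH q (fm q m) ^ m)) * Epow q m n := by
      rw [Epow, pow_succ', ← mul_assoc, hFE, sub_mul, mul_assoc, Epow]
    rw [step]
    refine Submodule.sub_mem _ ?_ ?_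
    · exact gen_mul_SS q β γ m α (uE_mul_Epow q β γ m α) _ ih
    · rw [smul_mul_assoc, sub_mul]
      exact Submodule.smul_mem _ _ (Submodule.sub_mem _
        (Kpow_mul_Epow q β γ m α hβ n) (Hpow_mul_Epow q β γ m α hγ n))

lemma SS_top (hq0 : q ≠ 0) (hβ : β ≠ 0) (hγ : γ ≠ 0) : SS q m α β γ = ⊤ := by
  rw [eq_top_iff]
  intro u _
  obtain ⟨x, rfl⟩ := RingQuot.mkAlgHom_surjective ℂ (URel q (fm q m)) u
  have key : ∀ x : FA, ∀ s ∈ SS q m α β γ, mkU q m x * s ∈ SS q m α β γ := by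
    intro x
    induction x using FreeAlgebra.induction with
    | grade0 c =>
      intro s hs
      rw [AlgHom.commutes, ← Algebra.smul_def]
      exact Submodule.smul_mem _ c hs
    | grade1 g =>
      cases g with
      | E => exact gen_mul_SS q β γ m α (uE_mul_Epow q β γ m α)
      | F => exact gen_mul_SS q β γ m α (uF_mul_Epow q β γ m α hq0 hβ hγ)
      | K => exact gen_mul_SS q β γ m α (uK_mul_Epow q β γ m α hβ)
      | Kinv => exact gen_mul_SS q β γ m α (uKi_mul_Epow q β γ m α hq0 hβ)
      | H => exact gen_mul_SS q β γ m α (uH_mul_Epow q β γ m α hγ)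
      | Hinv => exact gen_mul_SS q β γ m α (uHi_mul_Epow q β γ m α hq0 hγ)
    | mul a b ha hb =>
      intro s hs
      rw [map_mul, mul_assoc]
      exact ha _ (hb s hs)
    | add a b ha hb =>
      intro s hs
      rw [map_add, add_mul]
      exact Submodule.add_mem _ (ha s hs) (hb s hs)
  have h1 : (1 : Um q m) ∈ SS q m α β γ := by
    simpa [Epow] using Epow_mem_SS q β γ m α 0
  have := key x 1 h1
  rw [mul_one] at this
  exact this

/-! ### The representation map and `psi` -/

def Theta (hq0 : q ≠ 0) (hβ : β ≠ 0) (hγ : γ ≠ 0) : Um q m →ₐ[ℂ] Module.End ℂ V :=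
  RingQuot.liftAlgHom ℂ ⟨rho q β γ m, fun _ _ h => rho_rel hq0 hβ hγ h⟩

variable (hq0 : q ≠ 0) (hβ : β ≠ 0) (hγ : γ ≠ 0)

@[simp] lemma Theta_mk (x : FA) :
    Theta q β γ m hq0 hβ hγ (mkU q m x) = rho q β γ m x :=
  RingQuot.liftAlgHom_mkAlgHom_apply _ _ _ _

@[simp] lemma Theta_uE : Theta q β γ m hq0 hβ hγ (uE q (fm q m)) = Eop := by
  rw [uE_eq, Theta_mk, rho_gE]
@[simp] lemma Theta_uF : Theta q β γ m hq0 hβ hγ (uF q (fm q m)) = Fop q β γ m := by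
  rw [uF_eq, Theta_mk, rho_gF]
@[simp] lemma Theta_uK :
    Theta q β γ m hq0 hβ hγ (uK q (fm q m)) = dop (fun n => q^(2*n)*β) := by
  rw [uK_eq, Theta_mk, rho_gK]
@[simp] lemma Theta_uH :
    Theta q β γ m hq0 hβ hγ (uH q (fm q m)) = dop (fun n => (q^(2*n))⁻¹*γ) := by
  rw [uH_eq, Theta_mk, rho_gH]

def psi : Um q m →ₗ[ℂ] V where
  toFun u := Theta q β γ m hq0 hβ hγ u (Finsupp.single 0 1)
  map_add' u v := by rw [map_add, LinearMap.add_apply]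
  map_smul' c u := by rw [map_smul, LinearMap.smul_apply, RingHom.id_apply]

lemma psi_apply (u : Um q m) :
    psi q β γ m hq0 hβ hγ u = Theta q β γ m hq0 hβ hγ u (Finsupp.single 0 1) := rfl

lemma psi_mul (u v : Um q m) :
    psi q β γ m hq0 hβ hγ (u * v)
      = Theta q β γ m hq0 hβ hγ u (psi q β γ m hq0 hβ hγ v) := by
  rw [psi_apply, psi_apply, map_mul, Module.End.mul_apply]

lemma psi_Epow (n : ℕ) :
    psi q β γ m hq0 hβ hγ (Epow q m n) = Finsupp.single n 1 := by
  rw [psi_apply, Epow, map_pow, Theta_uE, Eop_pow_single, Nat.zero_add]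

lemma psi_one : psi q β γ m hq0 hβ hγ 1 = Finsupp.single 0 1 := by
  simpa [Epow] using psi_Epow q β γ m hq0 hβ hγ 0

lemma cc_zero : cc q β γ m 0 = 0 := rfl

lemma psi_P (hα : α = 0) {x : Um q m} (hx : x ∈ Pinf1 q m α β γ) :
    psi q β γ m hq0 hβ hγ x = 0 := by
  induction hx using Submodule.span_induction with
  | mem x hx =>
    rcases hx with h | h | h | h
    · subst h
      rw [map_sub, psi_mul, psi_apply, Theta_uF, Theta_uE]
      rw [Fop_single, cc_zero, zero_mul, Finsupp.single_zero, map_zero]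
      rw [psi_apply, AlgHom.commutes, Module.algebraMap_end_apply, hα, zero_smul,
        sub_zero]
    · subst h
      rw [map_sub, psi_apply, Theta_uK, dop_single, psi_apply, AlgHom.commutes,
        Module.algebraMap_end_apply, Finsupp.smul_single']
      norm_num
    · subst h
      rw [map_sub, psi_apply, Theta_uH, dop_single, psi_apply, AlgHom.commutes,
        Module.algebraMap_end_apply, Finsupp.smul_single']
      norm_num
    · rw [Set.mem_singleton_iff] at h
      subst h
      rw [psi_apply, Theta_uF, Fop_single, cc_zero, zero_mul, Finsupp.single_zero]
  | zero => exact map_zero _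
  | add x y _ _ hx hy => rw [map_add, hx, hy, add_zero]
  | smul u x _ hx =>
    rw [show u • x = u * x from rfl, psi_mul, hx, map_zero]

lemma mem_P_of_psi (hα : α = 0) {u : Um q m}
    (hu : psi q β γ m hq0 hβ hγ u = 0) : u ∈ Pinf1 q m α β γ := by
  have hSS : u ∈ SS q m α β γ := by rw [SS_top q β γ m α hq0 hβ hγ]; trivial
  rw [SS, Submodule.mem_sup] at hSS
  obtain ⟨p, hp, w, hw, rfl⟩ := hSS
  have hpw : psi q β γ m hq0 hβ hγ w = 0 := by
    rw [map_add, psi_P q β γ m α hq0 hβ hγ hα hp, zero_add] at hu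
    exact hu
  rw [Finsupp.mem_span_range_iff_exists_finsupp] at hw
  obtain ⟨cf, rfl⟩ := hw
  have hw2 : psi q β γ m hq0 hβ hγ (cf.sum fun i a => a • Epow q m i) = cf := by
    rw [map_finsuppSum]
    rw [show (cf.sum fun i a => psi q β γ m hq0 hβ hγ (a • Epow q m i))
        = cf.sum fun i a => Finsupp.single i a from ?_]
    · exact Finsupp.sum_single cf
    · apply Finsupp.sum_congr
      intro i _
      rw [map_smul, psi_Epow, Finsupp.smul_single', mul_one]
  rw [hpw] at hw2
  have hcf : cf = 0 := hw2.symm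
  subst hcf
  rw [Finsupp.sum_zero_index, add_zero]
  exact hp

/-! ### Closed form for `cc` -/

lemma cc_closed (hqz : q ≠ 0) (hu1 : q ^ (2*m) ≠ 1) (n : ℕ) :
    cc q β γ m n
      = -((q - q⁻¹)⁻¹ * ((1 - (q^(2*m))^n) / (1 - q^(2*m)) * β^m
          - (1 - ((q^(2*m))^n)⁻¹) / (1 - (q^(2*m))⁻¹) * γ^m)) := by
  have hu0 : q ^ (2*m) ≠ 0 := pow_ne_zero _ hqz
  have hd1 : (1 : ℂ) - q^(2*m) ≠ 0 := sub_ne_zero.mpr (Ne.symm hu1)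
  have hd2 : (1 : ℂ) - (q^(2*m))⁻¹ ≠ 0 :=
    sub_ne_zero.mpr (fun h => hu1 (by rw [← inv_inv (q^(2*m)), ← h, inv_one]))
  induction n with
  | zero => simp [cc_zero]
  | succ n ih =>
    rw [show cc q β γ m (n+1) = cc q β γ m n
        - (q - q⁻¹)⁻¹ * ((q^(2*n)*β)^m - ((q^(2*n))⁻¹*γ)^m) from rfl, ih]
    have e1 : (q^(2*n)*β)^m = (q^(2*m))^n * β^m := by
      rw [mul_pow, ← pow_mul, ← pow_mul, show 2*n*m = 2*m*n from by ring]
    have e2 : ((q^(2*n))⁻¹*γ)^m = ((q^(2*m))^n)⁻¹ * γ^m := by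
      rw [mul_pow, inv_pow, ← pow_mul, ← pow_mul, show 2*n*m = 2*m*n from by ring]
    rw [e1, e2]
    have hun : (q^(2*m))^n ≠ 0 := pow_ne_zero _ hu0
    have hA : (1 - (q^(2*m))^(n+1)) / (1 - q^(2*m))
        = (1 - (q^(2*m))^n) / (1 - q^(2*m)) + (q^(2*m))^n := by
      field_simp
      ring
    have hB : (1 - ((q^(2*m))^(n+1))⁻¹) / (1 - (q^(2*m))⁻¹)
        = (1 - ((q^(2*m))^n)⁻¹) / (1 - (q^(2*m))⁻¹) + ((q^(2*m))^n)⁻¹ := by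
      rw [div_add' _ _ _ hd2, div_eq_div_iff hd2 hd2]
      field_simp
      ring
    rw [hA, hB]
    ring

lemma cc_ne (hqz : q ≠ 0) (hu1 : q ^ (2*m) ≠ 1) (n : ℕ)
    (hexpr : (q - q⁻¹)⁻¹ *
        ((1 - q ^ (2 * n * m)) / (1 - q ^ (2 * m)) * β ^ m -
         (1 - q ^ (-(2 * (n : ℤ) * m))) / (1 - q ^ (-(2 * (m : ℤ)))) * γ ^ m) ≠ 0) :
    cc q β γ m n ≠ 0 := by
  rw [cc_closed q β γ m hqz hu1 n]
  have e1 : q ^ (2*n*m) = (q^(2*m))^n := by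
    rw [← pow_mul, show 2*m*n = 2*n*m from by ring]
  have e2 : q ^ (-(2 * (n:ℤ) * m)) = ((q^(2*m))^n)⁻¹ := by
    rw [zpow_neg, show (2 * (n:ℤ) * m) = ((2*n*m : ℕ) : ℤ) from by push_cast; ring,
      zpow_natCast, e1]
  have e3 : q ^ (-(2 * (m:ℤ))) = (q^(2*m))⁻¹ := by
    rw [zpow_neg, show (2 * (m:ℤ)) = ((2*m : ℕ) : ℤ) from by push_cast; ring,
      zpow_natCast]
  rw [neg_ne_zero]
  rw [← e2, ← e3, ← e1]
  exact hexpr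

lemma Fop_pow_single (k j : ℕ) (a : ℂ) :
    (Fop q β γ m ^ k) (Finsupp.single j a)
      = Finsupp.single (j - k) ((∏ i ∈ Finset.range k, cc q β γ m (j - i)) * a) := by
  induction k with
  | zero => simp
  | succ k ih =>
    rw [pow_succ', Module.End.mul_apply, ih, Fop_single, Finset.prod_range_succ,
      Nat.sub_sub]
    congr 1
    ring

lemma Fop_pow_apply (w : V) (n : ℕ) (hle : ∀ j ∈ w.support, j ≤ n) :
    (Fop q β γ m ^ n) w
      = Finsupp.single 0 ((∏ i ∈ Finset.range n, cc q β γ m (n - i)) * w n) := by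
  conv_lhs => rw [← Finsupp.sum_single w]
  rw [map_finsuppSum, Finsupp.sum]
  rw [Finset.sum_eq_single n]
  · rw [Fop_pow_single, Nat.sub_self]
  · intro b hb hbn
    have hblt : b < n := lt_of_le_of_ne (hle b hb) hbn
    rw [Fop_pow_single,
      Finset.prod_eq_zero (Finset.mem_range.mpr hblt) (by rw [Nat.sub_self, cc_zero]),
      zero_mul, Finsupp.single_zero]
  · intro hnotin
    rw [Finsupp.notMem_support_iff.mp hnotin]
    simp

end
end Stmt4Aux

/-- If `α = 0` and for every `n ≥ 1` one has
`(1/(q - q⁻¹))·(((1 - q^{2nm})/(1 - q^{2m}))β^m - ((1 - q^{-2nm})/(1 - q^{-2m}))γ^m) ≠ 0`,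
then `U/P_{∞,1}` is an infinite-dimensional irreducible representation of
`U = U_q(f_m(K,H))`. -/
theorem stmt4 (q : ℂ) (hq0 : q ≠ 0) (hq : ∀ n : ℕ, 0 < n → q ^ n ≠ 1)
    (m : ℕ) (hm : 1 ≤ m) (α β γ : ℂ) (hβ : β ≠ 0) (hγ : γ ≠ 0)
    (hα : α = 0)
    (hn : ∀ n : ℕ, 1 ≤ n →
      (q - q⁻¹)⁻¹ *
        ((1 - q ^ (2 * n * m)) / (1 - q ^ (2 * m)) * β ^ m -
         (1 - q ^ (-(2 * (n : ℤ) * m))) / (1 - q ^ (-(2 * (m : ℤ)))) * γ ^ m) ≠ 0) :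
    ¬ FiniteDimensional ℂ (Um q m ⧸ Pinf1 q m α β γ) ∧
    IsSimpleModule (Um q m) (Um q m ⧸ Pinf1 q m α β γ) := by
  classical
  have hu1 : q ^ (2*m) ≠ 1 := hq (2*m) (by omega)
  have hccne : ∀ k : ℕ, 1 ≤ k → Stmt4Aux.cc q β γ m k ≠ 0 := fun k hk =>
    Stmt4Aux.cc_ne q β γ m hq0 hu1 k (hn k hk)
  set ψ := Stmt4Aux.psi q β γ m hq0 hβ hγ with hψdef
  have pmul : ∀ u v : Um q m,
      ψ (u * v) = Stmt4Aux.Theta q β γ m hq0 hβ hγ u (ψ v) :=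
    Stmt4Aux.psi_mul q β γ m hq0 hβ hγ
  have pEpow : ∀ k : ℕ, ψ (Stmt4Aux.Epow q m k) = Finsupp.single k 1 :=
    Stmt4Aux.psi_Epow q β γ m hq0 hβ hγ
  have hker₁ : ∀ {x : Um q m}, x ∈ Pinf1 q m α β γ → ψ x = 0 :=
    fun hx => Stmt4Aux.psi_P q β γ m α hq0 hβ hγ hα hx
  have hker₂ : ∀ {u : Um q m}, ψ u = 0 → u ∈ Pinf1 q m α β γ :=
    fun hu => Stmt4Aux.mem_P_of_psi q β γ m α hq0 hβ hγ hα hu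
  have hwd : ∀ {a b : Um q m},
      (Submodule.Quotient.mk a : Um q m ⧸ Pinf1 q m α β γ) = Submodule.Quotient.mk b →
      ψ a = ψ b := by
    intro a b hmk
    rw [Submodule.Quotient.eq] at hmk
    have h0 := hker₁ hmk
    rw [map_sub] at h0
    exact sub_eq_zero.mp h0
  constructor
  · intro hfd
    let f : (Um q m ⧸ Pinf1 q m α β γ) →ₗ[ℂ] Stmt4Aux.V :=
      { toFun := fun x => Quotient.liftOn' x ψ (fun a b hab => hwd (Quotient.sound' hab))
        map_add' := by
          intro x y
          obtain ⟨a, rfl⟩ := Submodule.Quotient.mk_surjective _ x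
          obtain ⟨b, rfl⟩ := Submodule.Quotient.mk_surjective _ y
          rw [← Submodule.Quotient.mk_add]
          exact map_add ψ a b
        map_smul' := by
          intro c x
          obtain ⟨a, rfl⟩ := Submodule.Quotient.mk_surjective _ x
          rw [← Submodule.Quotient.mk_smul]
          exact map_smul ψ c a }
    have hfE : ∀ k : ℕ,
        f (Submodule.Quotient.mk (Stmt4Aux.Epow q m k)) = Finsupp.single k 1 :=
      fun k => pEpow k
    have hli0 : LinearIndependent ℂ (fun k : ℕ => (Finsupp.single k 1 : Stmt4Aux.V)) := by
      have hb := (Finsupp.basisSingleOne (R := ℂ) (ι := ℕ)).linearIndependent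
      simpa [Finsupp.coe_basisSingleOne] using hb
    have hli : LinearIndependent ℂ
        (fun k : ℕ => (Submodule.Quotient.mk (Stmt4Aux.Epow q m k) :
          Um q m ⧸ Pinf1 q m α β γ)) := by
      apply LinearIndependent.of_comp f
      have hcomp : (f ∘ fun k : ℕ => (Submodule.Quotient.mk (Stmt4Aux.Epow q m k) :
          Um q m ⧸ Pinf1 q m α β γ)) = fun k : ℕ => (Finsupp.single k 1 : Stmt4Aux.V) :=
        funext fun k => hfE k
      rw [hcomp]
      exact hli0
    haveI := hli.finite
    exact not_finite ℕ
  · rw [isSimpleModule_iff_isCoatom]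
    constructor
    · intro htop
      have h1 : (1 : Um q m) ∈ Pinf1 q m α β γ := htop ▸ Submodule.mem_top
      have h2 := hker₁ h1
      rw [show ψ 1 = Finsupp.single 0 1 from Stmt4Aux.psi_one q β γ m hq0 hβ hγ] at h2
      exact one_ne_zero (Finsupp.single_eq_zero.mp h2)
    · intro N hN
      obtain ⟨x, hxN, hxP⟩ := SetLike.exists_of_lt hN
      have hw : ψ x ≠ 0 := fun h => hxP (hker₂ h)
      have hsupp : (ψ x).support.Nonempty := Finsupp.support_nonempty_iff.mpr hw
      set n := (ψ x).support.max' hsupp with hndef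
      have hle : ∀ j ∈ (ψ x).support, j ≤ n := fun j hj => Finset.le_max' _ j hj
      set L := (∏ i ∈ Finset.range n, Stmt4Aux.cc q β γ m (n - i)) with hL
      have hLne : L ≠ 0 := Finset.prod_ne_zero_iff.mpr (fun i hi => hccne (n - i) (by
        rw [Finset.mem_range] at hi; omega))
      have hwn : ψ x n ≠ 0 := Finsupp.mem_support_iff.mp (Finset.max'_mem _ hsupp)
      have hF : ψ (uF q (fm q m) ^ n * x) = Finsupp.single 0 (L * ψ x n) := by
        rw [pmul, map_pow, Stmt4Aux.Theta_uF q β γ m hq0 hβ hγ]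
        exact Stmt4Aux.Fop_pow_apply q β γ m (ψ x) n hle
      set y := algebraMap ℂ (Um q m) (L * ψ x n)⁻¹ * (uF q (fm q m) ^ n * x) with hy
      have hyN : y ∈ N := N.smul_mem _ (N.smul_mem _ hxN)
      have hψy : ψ y = Finsupp.single 0 1 := by
        rw [hy, pmul, hF, AlgHom.commutes, Module.algebraMap_end_apply,
          Finsupp.smul_single', inv_mul_cancel₀ (mul_ne_zero hLne hwn)]
      rw [eq_top_iff]
      intro u _
      have h1 : ψ (u * y) = ψ u := by rw [pmul, hψy]; rfl
      have h2 : u - u * y ∈ Pinf1 q m α β γ :=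
        hker₂ (by rw [map_sub, h1, sub_self])
      have h3 : u - u * y ∈ N := le_of_lt hN h2
      have h4 := N.add_mem h3 (N.smul_mem u hyN)
      simpa using h4
end

section
/- The Casimir element Ω = FE + (q^{2m}K^m + H^m)/((q^{2m} − 1)(q − q⁻¹)) lies in the center of U; that is, Ω commutes with E, F, K, and H (and hence with every element of U). -/
section Helpers

lemma pow_qcomm {A : Type*} [Ring A] [Algebra ℂ A] (x y : A) (c : ℂ)
    (h : x * y = c • (y * x)) : ∀ n : ℕ, x ^ n * y = c ^ n • (y * x ^ n)
  | 0 => by simp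
  | n + 1 => by
    rw [pow_succ, mul_assoc, h, mul_smul_comm, ← mul_assoc, pow_qcomm x y c h n,
      smul_mul_assoc, smul_smul, mul_assoc, ← pow_succ, ← pow_succ']

lemma casimir_comm_e {A : Type*} [Ring A] [Algebra ℂ A] (e f km hm : A) (s t : ℂ)
    (hs : s ≠ 0) (ht0 : t ≠ 0) (ht1 : t - 1 ≠ 0)
    (h1 : km * e = t • (e * km))
    (h2 : hm * e = t⁻¹ • (e * hm))
    (hEF : e * f - f * e = s⁻¹ • (km - hm)) :
    (f * e + ((t - 1) * s)⁻¹ • (t • km + hm)) * e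
      = e * (f * e + ((t - 1) * s)⁻¹ • (t • km + hm)) := by
  have hEF' : e * f = f * e + s⁻¹ • (km - hm) := sub_eq_iff_eq_add'.mp hEF
  rw [mul_inv, add_mul, mul_add, ← mul_assoc, hEF']
  simp only [smul_mul_assoc, mul_smul_comm, add_mul, mul_add, sub_mul, mul_sub, smul_add,
    smul_sub, h1, h2, smul_smul, mul_assoc]
  match_scalars <;> field_simp <;> ring

lemma casimir_comm_f {A : Type*} [Ring A] [Algebra ℂ A] (e f km hm : A) (s t : ℂ)
    (hs : s ≠ 0) (ht0 : t ≠ 0) (ht1 : t - 1 ≠ 0)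
    (h1 : km * f = t⁻¹ • (f * km))
    (h2 : hm * f = t • (f * hm))
    (hEF : e * f - f * e = s⁻¹ • (km - hm)) :
    (f * e + ((t - 1) * s)⁻¹ • (t • km + hm)) * f
      = f * (f * e + ((t - 1) * s)⁻¹ • (t • km + hm)) := by
  have hEF' : e * f = f * e + s⁻¹ • (km - hm) := sub_eq_iff_eq_add'.mp hEF
  rw [mul_inv, add_mul, mul_add, mul_assoc, hEF']
  simp only [smul_mul_assoc, mul_smul_comm, add_mul, mul_add, sub_mul, mul_sub, smul_add,
    smul_sub, h1, h2, smul_smul, mul_assoc]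
  match_scalars <;> field_simp <;> ring

lemma conj_comm {A : Type*} [Ring A] [Algebra ℂ A] (k x y : A) (a b : ℂ)
    (hab : a * b = 1) (hx : k * x = a • (x * k)) (hy : k * y = b • (y * k)) :
    k * (x * y) = (x * y) * k := by
  rw [← mul_assoc, hx, smul_mul_assoc, mul_assoc, hy, mul_smul_comm, smul_smul, hab,
    one_smul, mul_assoc]

lemma comm_helper {A : Type*} [Ring A] [Algebra ℂ A] (x k km hm : A) (c t : ℂ)
    (h1 : k * x = x * k) (h2 : k * km = km * k) (h3 : k * hm = hm * k) :
    (x + c • (t • km + hm)) * k = k * (x + c • (t • km + hm)) := by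
  simp only [add_mul, mul_add, smul_mul_assoc, mul_smul_comm, h1, h2, h3]

lemma inv_comm {A : Type*} [Ring A] (k ki w : A) (h1 : k * ki = 1) (h2 : ki * k = 1)
    (h : w * k = k * w) : w * ki = ki * w := by
  have h3 : ki * w * k * ki = ki * k * w * ki := by rw [mul_assoc ki w k, h, ← mul_assoc]
  rw [h2, one_mul, mul_assoc (ki * w) k ki, h1, mul_one] at h3
  exact h3.symm

end Helpers

/-- The Casimir element `Ω = FE + (q^{2m}K^m + H^m)/((q^{2m} - 1)(q - q⁻¹))`. -/
noncomputable def Om (q : ℂ) (m : ℕ) : Um q m :=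
  uF q (fm q m) * uE q (fm q m) +
    ((q ^ (2 * m) - 1) * (q - q⁻¹))⁻¹ •
      (q ^ (2 * m) • uK q (fm q m) ^ m + uH q (fm q m) ^ m)
/-- The Casimir element `Ω` lies in the center of `U = U_q(f_m(K,H))`:
it commutes with `E`, `F`, `K`, `H`, and hence with every element of `U`. -/
theorem stmt11 (q : ℂ) (hq0 : q ≠ 0) (hq : ∀ n : ℕ, 0 < n → q ^ n ≠ 1)
    (m : ℕ) (hm : 1 ≤ m) :
    Om q m * uE q (fm q m) = uE q (fm q m) * Om q m ∧
    Om q m * uF q (fm q m) = uF q (fm q m) * Om q m ∧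
    Om q m * uK q (fm q m) = uK q (fm q m) * Om q m ∧
    Om q m * uH q (fm q m) = uH q (fm q m) * Om q m ∧
    Om q m ∈ Subalgebra.center ℂ (Um q m) := by
  have hq2 : (q : ℂ) ^ 2 ≠ 0 := pow_ne_zero _ hq0
  have hs : q - q⁻¹ ≠ 0 := by
    intro h
    apply hq 2 (by norm_num)
    have h1 : q = q⁻¹ := sub_eq_zero.mp h
    have h2 : q * q = 1 := by nth_rewrite 1 [h1]; exact inv_mul_cancel₀ hq0
    rw [sq]; exact h2
  have ht1 : q ^ (2 * m) - 1 ≠ 0 := sub_ne_zero.mpr (hq (2 * m) (by omega))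
  have ht0 : q ^ (2 * m) ≠ 0 := pow_ne_zero _ hq0
  set mk := RingQuot.mkAlgHom ℂ (URel q (fm q m)) with hmkdef
  have rel : ∀ {a b : FA}, URel q (fm q m) a b → mk a = mk b :=
    fun h => RingQuot.mkAlgHom_rel ℂ h
  set E := uE q (fm q m) with hEdef
  set F := uF q (fm q m) with hFdef
  set K := uK q (fm q m) with hKdef
  set Ki := uKi q (fm q m) with hKidef
  set H := uH q (fm q m) with hHdef
  set Hi := uHi q (fm q m) with hHidef
  have hKE : K * E = q ^ 2 • (E * K) := by
    have := rel URel.KE; rw [map_mul, map_smul, map_mul] at this; exact this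
  have hKF : K * F = (q ^ 2)⁻¹ • (F * K) := by
    have := rel URel.KF; rw [map_mul, map_smul, map_mul] at this; exact this
  have hHE : H * E = (q ^ 2)⁻¹ • (E * H) := by
    have := rel URel.HE; rw [map_mul, map_smul, map_mul] at this; exact this
  have hHF : H * F = q ^ 2 • (F * H) := by
    have := rel URel.HF; rw [map_mul, map_smul, map_mul] at this; exact this
  have hKH : K * H = H * K := by
    have := rel URel.KH; rw [map_mul, map_mul] at this; exact this
  have hKKi : K * Ki = 1 := by
    have := rel URel.KKi; rw [map_mul, map_one] at this; exact this
  have hKiK : Ki * K = 1 := by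
    have := rel URel.KiK; rw [map_mul, map_one] at this; exact this
  have hHHi : H * Hi = 1 := by
    have := rel URel.HHi; rw [map_mul, map_one] at this; exact this
  have hHiH : Hi * H = 1 := by
    have := rel URel.HiH; rw [map_mul, map_one] at this; exact this
  have hEF : E * F - F * E = (q - q⁻¹)⁻¹ • (K ^ m - H ^ m) := by
    have h := rel URel.EF
    rw [map_sub, map_mul, map_mul] at h
    calc E * F - F * E = mk (fm q m) := h
      _ = (q - q⁻¹)⁻¹ • (K ^ m - H ^ m) := by
          show mk ((q - q⁻¹)⁻¹ • (gK ^ m - gH ^ m)) = _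
          rw [map_smul, map_sub, map_pow, map_pow]
          rfl
  have hKmE : K ^ m * E = q ^ (2 * m) • (E * K ^ m) := by
    have := pow_qcomm K E (q ^ 2) hKE m
    rwa [← pow_mul] at this
  have hHmE : H ^ m * E = (q ^ (2 * m))⁻¹ • (E * H ^ m) := by
    have := pow_qcomm H E ((q ^ 2)⁻¹) hHE m
    rwa [inv_pow, ← pow_mul] at this
  have hKmF : K ^ m * F = (q ^ (2 * m))⁻¹ • (F * K ^ m) := by
    have := pow_qcomm K F ((q ^ 2)⁻¹) hKF m
    rwa [inv_pow, ← pow_mul] at this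
  have hHmF : H ^ m * F = q ^ (2 * m) • (F * H ^ m) := by
    have := pow_qcomm H F (q ^ 2) hHF m
    rwa [← pow_mul] at this
  have hOm : Om q m = F * E + ((q ^ (2 * m) - 1) * (q - q⁻¹))⁻¹ •
      (q ^ (2 * m) • K ^ m + H ^ m) := rfl
  have partE : Om q m * E = E * Om q m := by
    rw [hOm]; exact casimir_comm_e E F (K ^ m) (H ^ m) _ _ hs ht0 ht1 hKmE hHmE hEF
  have partF : Om q m * F = F * Om q m := by
    rw [hOm]; exact casimir_comm_f E F (K ^ m) (H ^ m) _ _ hs ht0 ht1 hKmF hHmF hEF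
  have hKFE : K * (F * E) = (F * E) * K :=
    conj_comm K F E ((q ^ 2)⁻¹) (q ^ 2) (inv_mul_cancel₀ hq2) hKF hKE
  have hHFE : H * (F * E) = (F * E) * H :=
    conj_comm H F E (q ^ 2) ((q ^ 2)⁻¹) (mul_inv_cancel₀ hq2) hHF hHE
  have hCKH : Commute K H := hKH
  have partK : Om q m * K = K * Om q m := by
    rw [hOm]
    exact (comm_helper (F * E) K (K ^ m) (H ^ m) _ _ hKFE
      ((Commute.refl K).pow_right m).eq ((hCKH.pow_right m)).eq).symm.symm
  have partH : Om q m * H = H * Om q m := by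
    rw [hOm]
    exact comm_helper (F * E) H (K ^ m) (H ^ m) _ _ hHFE
      ((hCKH.symm.pow_right m)).eq ((Commute.refl H).pow_right m).eq
  have partKi : Om q m * Ki = Ki * Om q m := inv_comm K Ki (Om q m) hKKi hKiK partK
  have partHi : Om q m * Hi = Hi * Om q m := inv_comm H Hi (Om q m) hHHi hHiH partH
  have hcen : ∀ x : Um q m, Om q m * x = x * Om q m := by
    intro x
    obtain ⟨y, rfl⟩ := RingQuot.mkAlgHom_surjective ℂ (URel q (fm q m)) x
    induction y using FreeAlgebra.induction with
    | grade0 r =>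
        rw [show (RingQuot.mkAlgHom ℂ (URel q (fm q m))) (algebraMap ℂ FA r)
            = algebraMap ℂ (Um q m) r from AlgHom.commutes _ r]
        exact (Algebra.commutes r (Om q m)).symm
    | grade1 g =>
        cases g with
        | E => exact partE
        | F => exact partF
        | K => exact partK
        | Kinv => exact partKi
        | H => exact partH
        | Hinv => exact partHi
    | mul a b ha hb => rw [map_mul, ← mul_assoc, ha, mul_assoc, hb, mul_assoc]
    | add a b ha hb => rw [map_add, mul_add, add_mul, ha, hb]
  exact ⟨partE, partF, partK, partH,
    Subalgebra.mem_center_iff.mpr fun b => (hcen b).symm⟩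
end

section
/- For every c ∈ ℂ with c ≠ 0, U decomposes as the internal direct sum of ℂ-vector spaces U = B ⊕ U(E − c), where U(E − c) is the left ideal of U generated by E − c. -/
/-- The subalgebra `B = U_q(F, K^{±1}, H^{±1})` of `U` generated by `F, K, K⁻¹, H, H⁻¹`. -/
noncomputable def Bsub (q : ℂ) (m : ℕ) : Subalgebra ℂ (Um q m) :=
  Algebra.adjoin ℂ ({uF q (fm q m), uK q (fm q m), uKi q (fm q m),
    uH q (fm q m), uHi q (fm q m)} : Set (Um q m))

/-- The left ideal `U(E - c)` of `U` generated by `E - c`. -/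
noncomputable def Lc (q : ℂ) (m : ℕ) (c : ℂ) : Submodule (Um q m) (Um q m) :=
  Submodule.span (Um q m) {uE q (fm q m) - algebraMap ℂ (Um q m) c}


noncomputable section AuxMod

/-- Free module with basis indexed by monomials `F^a K^i H^j`. -/
abbrev MM : Type := (ℕ × ℤ × ℤ) →₀ ℂ

def sng (p : ℕ × ℤ × ℤ) : MM := Finsupp.single p 1

def mkOp (f : ℕ × ℤ × ℤ → MM) : MM →ₗ[ℂ] MM := Finsupp.lift MM ℂ _ f

lemma mkOp_sng (f : ℕ × ℤ × ℤ → MM) (p : ℕ × ℤ × ℤ) : mkOp f (sng p) = f p := by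
  simp [mkOp, sng, Finsupp.lift_apply, Finsupp.sum_single_index]

variable (q c : ℂ) (m : ℕ)

def fOp : MM →ₗ[ℂ] MM := mkOp fun p => sng (p.1 + 1, p.2.1, p.2.2)
def kOp : MM →ₗ[ℂ] MM := mkOp fun p => ((q^2)⁻¹)^p.1 • sng (p.1, p.2.1 + 1, p.2.2)
def kiOp : MM →ₗ[ℂ] MM := mkOp fun p => (q^2)^p.1 • sng (p.1, p.2.1 - 1, p.2.2)
def hOp : MM →ₗ[ℂ] MM := mkOp fun p => (q^2)^p.1 • sng (p.1, p.2.1, p.2.2 + 1)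
def hiOp : MM →ₗ[ℂ] MM := mkOp fun p => ((q^2)⁻¹)^p.1 • sng (p.1, p.2.1, p.2.2 - 1)
def eOp : MM →ₗ[ℂ] MM := mkOp fun p =>
  (c * (q^2)^p.2.2 * ((q^2)^p.2.1)⁻¹) • sng p
  + ((q - q⁻¹)⁻¹ * ∑ t ∈ Finset.range p.1, ((q^2)⁻¹)^(m*t)) • sng (p.1 - 1, p.2.1 + m, p.2.2)
  - ((q - q⁻¹)⁻¹ * ∑ t ∈ Finset.range p.1, (q^2)^(m*t)) • sng (p.1 - 1, p.2.1, p.2.2 + m)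

@[simp] lemma fOp_sng (a : ℕ) (i j : ℤ) : fOp (sng (a,i,j)) = sng (a+1,i,j) := mkOp_sng _ _
@[simp] lemma kOp_sng (a : ℕ) (i j : ℤ) : kOp q (sng (a,i,j)) = ((q^2)⁻¹)^a • sng (a,i+1,j) := mkOp_sng _ _
@[simp] lemma kiOp_sng (a : ℕ) (i j : ℤ) : kiOp q (sng (a,i,j)) = (q^2)^a • sng (a,i-1,j) := mkOp_sng _ _
@[simp] lemma hOp_sng (a : ℕ) (i j : ℤ) : hOp q (sng (a,i,j)) = (q^2)^a • sng (a,i,j+1) := mkOp_sng _ _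
@[simp] lemma hiOp_sng (a : ℕ) (i j : ℤ) : hiOp q (sng (a,i,j)) = ((q^2)⁻¹)^a • sng (a,i,j-1) := mkOp_sng _ _
@[simp] lemma eOp_sng (a : ℕ) (i j : ℤ) : eOp q c m (sng (a,i,j)) =
    (c * (q^2)^j * ((q^2)^i)⁻¹) • sng (a,i,j)
    + ((q - q⁻¹)⁻¹ * ∑ t ∈ Finset.range a, ((q^2)⁻¹)^(m*t)) • sng (a - 1, i + m, j)
    - ((q - q⁻¹)⁻¹ * ∑ t ∈ Finset.range a, (q^2)^(m*t)) • sng (a - 1, i, j + m) := mkOp_sng _ _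

/-- extensionality on basis -/
lemma end_ext {f g : MM →ₗ[ℂ] MM} (h : ∀ p : ℕ × ℤ × ℤ, f (sng p) = g (sng p)) : f = g := by
  refine Module.Basis.ext Finsupp.basisSingleOne fun p => ?_
  simpa [sng, Finsupp.basisSingleOne] using h p

lemma kOp_pow (M a : ℕ) (i j : ℤ) :
    ((kOp q)^M) (sng (a,i,j)) = ((q^2)⁻¹)^(a*M) • sng (a, i + M, j) := by
  induction M generalizing i with
  | zero => simp
  | succ n ih =>
      have h1 : ((kOp q)^(n+1)) (sng (a,i,j)) = ((kOp q)^ n) (kOp q (sng (a,i,j))) := by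
        rw [pow_succ, Module.End.mul_apply]
      rw [h1, kOp_sng, map_smul, ih, smul_smul, ← pow_add]
      have e1 : a + a * n = a * (n+1) := by ring
      have e2 : (i + 1) + (n:ℤ) = i + ((n+1 : ℕ) : ℤ) := by push_cast; ring
      rw [e1, e2]

lemma hOp_pow (M a : ℕ) (i j : ℤ) :
    ((hOp q)^M) (sng (a,i,j)) = (q^2)^(a*M) • sng (a, i, j + M) := by
  induction M generalizing j with
  | zero => simp
  | succ n ih =>
      have h1 : ((hOp q)^(n+1)) (sng (a,i,j)) = ((hOp q)^ n) (hOp q (sng (a,i,j))) := by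
        rw [pow_succ, Module.End.mul_apply]
      rw [h1, hOp_sng, map_smul, ih, smul_smul, ← pow_add]
      have e1 : a + a * n = a * (n+1) := by ring
      have e2 : (j + 1) + (n:ℤ) = j + ((n+1 : ℕ) : ℤ) := by push_cast; ring
      rw [e1, e2]

end AuxMod

noncomputable section Rep

open FreeAlgebra

def rho (q c : ℂ) (m : ℕ) : FA →ₐ[ℂ] Module.End ℂ MM :=
  FreeAlgebra.lift ℂ (fun g => match g with
    | Gen.E => eOp q c m
    | Gen.F => fOp
    | Gen.K => kOp q
    | Gen.Kinv => kiOp q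
    | Gen.H => hOp q
    | Gen.Hinv => hiOp q)

@[simp] lemma rho_gE (q c : ℂ) (m : ℕ) : rho q c m gE = eOp q c m := FreeAlgebra.lift_ι_apply _ _
@[simp] lemma rho_gF (q c : ℂ) (m : ℕ) : rho q c m gF = fOp := FreeAlgebra.lift_ι_apply _ _
@[simp] lemma rho_gK (q c : ℂ) (m : ℕ) : rho q c m gK = kOp q := FreeAlgebra.lift_ι_apply _ _
@[simp] lemma rho_gKi (q c : ℂ) (m : ℕ) : rho q c m gKi = kiOp q := FreeAlgebra.lift_ι_apply _ _
@[simp] lemma rho_gH (q c : ℂ) (m : ℕ) : rho q c m gH = hOp q := FreeAlgebra.lift_ι_apply _ _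
@[simp] lemma rho_gHi (q c : ℂ) (m : ℕ) : rho q c m gHi = hiOp q := FreeAlgebra.lift_ι_apply _ _

theorem rho_rel (q c : ℂ) (hq0 : q ≠ 0) (m : ℕ) :
    ∀ ⦃x y : FA⦄, URel q (fm q m) x y → rho q c m x = rho q c m y := by
  have hq2 : (q:ℂ)^2 ≠ 0 := pow_ne_zero _ hq0
  intro x y h
  induction h with
  | KKi =>
      simp only [map_mul, map_one, rho_gK, rho_gKi]
      refine end_ext fun ⟨a,i,j⟩ => ?_
      simp only [Module.End.mul_apply, Module.End.one_apply, kiOp_sng, map_smul, kOp_sng,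
        smul_smul]
      rw [show i - 1 + 1 = i by ring, inv_pow, mul_inv_cancel₀ (pow_ne_zero _ hq2), one_smul]
  | KiK =>
      simp only [map_mul, map_one, rho_gK, rho_gKi]
      refine end_ext fun ⟨a,i,j⟩ => ?_
      simp only [Module.End.mul_apply, Module.End.one_apply, kOp_sng, map_smul, kiOp_sng,
        smul_smul]
      rw [show i + 1 - 1 = i by ring, inv_pow, inv_mul_cancel₀ (pow_ne_zero _ hq2), one_smul]
  | HHi =>
      simp only [map_mul, map_one, rho_gH, rho_gHi]
      refine end_ext fun ⟨a,i,j⟩ => ?_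
      simp only [Module.End.mul_apply, Module.End.one_apply, hiOp_sng, map_smul, hOp_sng,
        smul_smul]
      rw [show j - 1 + 1 = j by ring, inv_pow, inv_mul_cancel₀ (pow_ne_zero _ hq2), one_smul]
  | HiH =>
      simp only [map_mul, map_one, rho_gH, rho_gHi]
      refine end_ext fun ⟨a,i,j⟩ => ?_
      simp only [Module.End.mul_apply, Module.End.one_apply, hOp_sng, map_smul, hiOp_sng,
        smul_smul]
      rw [show j + 1 - 1 = j by ring, inv_pow, mul_inv_cancel₀ (pow_ne_zero _ hq2), one_smul]
  | KH =>
      simp only [map_mul, rho_gK, rho_gH]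
      refine end_ext fun ⟨a,i,j⟩ => ?_
      simp only [Module.End.mul_apply, hOp_sng, kOp_sng, map_smul, smul_smul]
      rw [mul_comm]
  | KE =>
      simp only [map_mul, map_smul, rho_gK, rho_gE]
      refine end_ext fun ⟨a,i,j⟩ => ?_
      have hzi : ((q:ℂ)^2)^i ≠ 0 := zpow_ne_zero _ hq2
      simp only [LinearMap.smul_apply, Module.End.mul_apply]
      rw [eOp_sng, kOp_sng, map_smul, eOp_sng, map_sub, map_add, map_smul, map_smul, map_smul,
        kOp_sng, kOp_sng, kOp_sng, zpow_add_one₀ hq2]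
      rcases a with _ | n
      · simp
        match_scalars
        field_simp
      · simp only [Nat.add_sub_cancel, Nat.succ_sub_one]
        rw [show i + (m:ℤ) + 1 = i + 1 + (m:ℤ) by ring]
        set l := (q - q⁻¹)⁻¹ with hl
        match_scalars
        · field_simp
        · field_simp; ring_nf; field_simp
        · field_simp; ring_nf; field_simp
  | KF =>
      simp only [map_mul, map_smul, rho_gK, rho_gF]
      refine end_ext fun ⟨a,i,j⟩ => ?_
      simp only [LinearMap.smul_apply, Module.End.mul_apply, fOp_sng, kOp_sng, map_smul]
      match_scalars
      ring
  | HE =>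
      simp only [map_mul, map_smul, rho_gH, rho_gE]
      refine end_ext fun ⟨a,i,j⟩ => ?_
      have hzi : ((q:ℂ)^2)^i ≠ 0 := zpow_ne_zero _ hq2
      simp only [LinearMap.smul_apply, Module.End.mul_apply]
      rw [eOp_sng, hOp_sng, map_smul, eOp_sng, map_sub, map_add, map_smul, map_smul, map_smul,
        hOp_sng, hOp_sng, hOp_sng, zpow_add_one₀ hq2]
      rcases a with _ | n
      · simp
        match_scalars
        field_simp
      · simp only [Nat.add_sub_cancel, Nat.succ_sub_one]
        rw [show j + (m:ℤ) + 1 = j + 1 + (m:ℤ) by ring]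
        set l := (q - q⁻¹)⁻¹ with hl
        match_scalars
        · field_simp
        · field_simp; ring_nf
        · field_simp; ring_nf
  | HF =>
      simp only [map_mul, map_smul, rho_gH, rho_gF]
      refine end_ext fun ⟨a,i,j⟩ => ?_
      simp only [LinearMap.smul_apply, Module.End.mul_apply, fOp_sng, hOp_sng, map_smul]
      match_scalars
      field_simp
      ring
  | EF =>
      simp only [map_mul, map_sub, map_smul, rho_gE, rho_gF, fm, map_pow, rho_gK, rho_gH]
      refine end_ext fun ⟨a,i,j⟩ => ?_
      simp only [LinearMap.sub_apply, LinearMap.smul_apply, Module.End.mul_apply]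
      rw [fOp_sng, eOp_sng, eOp_sng, kOp_pow, hOp_pow, map_sub, map_add, map_smul, map_smul,
        map_smul, fOp_sng, fOp_sng, fOp_sng]
      rcases a with _ | n
      · simp
        match_scalars <;> ring
      · simp only [Nat.add_sub_cancel, Nat.succ_sub_one, Finset.sum_range_succ]
        match_scalars <;> ring
noncomputable section USide

/-- commuting an element past a power. -/
lemma comm_pow {A : Type*} [Ring A] [Algebra ℂ A] (x g : A) (s : ℂ)
    (h : x * g = s • (g * x)) (b : ℕ) : x * g ^ b = s ^ b • (g ^ b * x) := by
  induction b with
  | zero => simp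
  | succ n ih =>
      calc x * g ^ (n+1) = (x * g ^ n) * g := by rw [pow_succ, mul_assoc]
        _ = (s ^ n • (g ^ n * x)) * g := by rw [ih]
        _ = s ^ n • (g ^ n * (x * g)) := by rw [smul_mul_assoc, mul_assoc]
        _ = s ^ n • (g ^ n * (s • (g * x))) := by rw [h]
        _ = s ^ (n+1) • (g ^ (n+1) * x) := by
            rw [mul_smul_comm, smul_smul, ← pow_succ, ← mul_assoc, ← pow_succ]

/-- commuting an element past an integer power of a unit. -/
lemma comm_zpow {A : Type*} [Ring A] [Algebra ℂ A] (w : Aˣ) (g : A) (s : ℂ) (hs : s ≠ 0)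
    (h : (w : A) * g = s • (g * (w : A))) (i : ℤ) :
    ((w ^ i : Aˣ) : A) * g = s ^ i • (g * ((w ^ i : Aˣ) : A)) := by
  have hinv : ((w⁻¹ : Aˣ) : A) * g = s⁻¹ • (g * ((w⁻¹ : Aˣ) : A)) := by
    have e1 : ((w⁻¹ : Aˣ) : A) * ((w : A) * g) * ((w⁻¹ : Aˣ) : A) = g * ((w⁻¹ : Aˣ) : A) := by
      rw [← mul_assoc, Units.inv_mul, one_mul]
    have e2 : ((w⁻¹ : Aˣ) : A) * (s • (g * (w : A))) * ((w⁻¹ : Aˣ) : A)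
        = s • (((w⁻¹ : Aˣ) : A) * g) := by
      rw [mul_smul_comm, smul_mul_assoc]
      congr 1
      rw [← mul_assoc, mul_assoc, Units.mul_inv, mul_one]
    have e3 : g * ((w⁻¹ : Aˣ) : A) = s • (((w⁻¹ : Aˣ) : A) * g) := by
      rw [← e1, h, e2]
    exact ((inv_smul_eq_iff₀ hs).mpr e3).symm
  induction i using Int.induction_on with
  | zero => simp
  | succ n ih =>
      have e : w ^ ((n : ℤ) + 1) = w ^ (n : ℤ) * w := by rw [zpow_add_one]
      rw [e, Units.val_mul]
      calc ((w ^ (n:ℤ) : Aˣ) : A) * (w : A) * g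
          = ((w ^ (n:ℤ) : Aˣ) : A) * ((w : A) * g) := by rw [mul_assoc]
        _ = ((w ^ (n:ℤ) : Aˣ) : A) * (s • (g * (w : A))) := by rw [h]
        _ = s • ((((w ^ (n:ℤ) : Aˣ) : A) * g) * (w : A)) := by
            rw [mul_smul_comm, mul_assoc]
        _ = s • ((s ^ (n:ℤ) • (g * ((w ^ (n:ℤ) : Aˣ) : A))) * (w : A)) := by rw [ih]
        _ = s ^ ((n:ℤ)+1) • (g * (((w ^ (n:ℤ) : Aˣ) : A) * (w : A))) := by
            rw [smul_mul_assoc, smul_smul, mul_assoc, zpow_add_one₀ hs, mul_comm s]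
  | pred n ih =>
      have e : w ^ (-(n : ℤ) - 1) = w ^ (-(n : ℤ)) * w⁻¹ := by rw [zpow_sub_one]
      rw [e, Units.val_mul]
      calc ((w ^ (-(n:ℤ)) : Aˣ) : A) * ((w⁻¹ : Aˣ) : A) * g
          = ((w ^ (-(n:ℤ)) : Aˣ) : A) * (((w⁻¹ : Aˣ) : A) * g) := by rw [mul_assoc]
        _ = ((w ^ (-(n:ℤ)) : Aˣ) : A) * (s⁻¹ • (g * ((w⁻¹ : Aˣ) : A))) := by rw [hinv]
        _ = s⁻¹ • ((((w ^ (-(n:ℤ)) : Aˣ) : A) * g) * ((w⁻¹ : Aˣ) : A)) := by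
            rw [mul_smul_comm, mul_assoc]
        _ = s⁻¹ • ((s ^ (-(n:ℤ)) • (g * ((w ^ (-(n:ℤ)) : Aˣ) : A))) * ((w⁻¹ : Aˣ) : A)) := by
            rw [ih]
        _ = s ^ (-(n:ℤ)-1) • (g * (((w ^ (-(n:ℤ)) : Aˣ) : A) * ((w⁻¹ : Aˣ) : A))) := by
            rw [smul_mul_assoc, smul_smul, mul_assoc, zpow_sub_one₀ hs, mul_comm]

namespace St13

variable (q : ℂ) (m : ℕ)

abbrev vE : Um q m := uE q (fm q m)
abbrev vF : Um q m := uF q (fm q m)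
abbrev vK : Um q m := uK q (fm q m)
abbrev vKi : Um q m := uKi q (fm q m)
abbrev vH : Um q m := uH q (fm q m)
abbrev vHi : Um q m := uHi q (fm q m)
abbrev mk : FA →ₐ[ℂ] Um q m := RingQuot.mkAlgHom ℂ (URel q (fm q m))

lemma rel {x y : FA} (h : URel q (fm q m) x y) : mk q m x = mk q m y :=
  RingQuot.mkAlgHom_rel ℂ h

lemma vKKi : vK q m * vKi q m = 1 := by
  have h := rel q m URel.KKi; simp only [map_mul, map_one] at h; exact h
lemma vKiK : vKi q m * vK q m = 1 := by
  have h := rel q m URel.KiK; simp only [map_mul, map_one] at h; exact h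
lemma vHHi : vH q m * vHi q m = 1 := by
  have h := rel q m URel.HHi; simp only [map_mul, map_one] at h; exact h
lemma vHiH : vHi q m * vH q m = 1 := by
  have h := rel q m URel.HiH; simp only [map_mul, map_one] at h; exact h
lemma vKH : vK q m * vH q m = vH q m * vK q m := by
  have h := rel q m URel.KH; simp only [map_mul] at h; exact h
lemma vKE : vK q m * vE q m = q ^ 2 • (vE q m * vK q m) := by
  have h := rel q m URel.KE; simp only [map_mul, map_smul] at h; exact h
lemma vKF : vK q m * vF q m = (q ^ 2)⁻¹ • (vF q m * vK q m) := by
  have h := rel q m URel.KF; simp only [map_mul, map_smul] at h; exact h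
lemma vHE : vH q m * vE q m = (q ^ 2)⁻¹ • (vE q m * vH q m) := by
  have h := rel q m URel.HE; simp only [map_mul, map_smul] at h; exact h
lemma vHF : vH q m * vF q m = q ^ 2 • (vF q m * vH q m) := by
  have h := rel q m URel.HF; simp only [map_mul, map_smul] at h; exact h
lemma vEF : vE q m * vF q m = vF q m * vE q m + mk q m (fm q m) := by
  have h := rel q m (URel.EF)
  simp only [map_sub, map_mul] at h
  rw [← h]
  exact eq_add_of_sub_eq' rfl

def wK : (Um q m)ˣ := ⟨vK q m, vKi q m, vKKi q m, vKiK q m⟩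
def wH : (Um q m)ˣ := ⟨vH q m, vHi q m, vHHi q m, vHiH q m⟩
def zK (i : ℤ) : Um q m := ((wK q m ^ i : (Um q m)ˣ) : Um q m)
def zH (j : ℤ) : Um q m := ((wH q m ^ j : (Um q m)ˣ) : Um q m)

end St13
end USide
noncomputable section USide2
namespace St13

variable (q : ℂ) (m : ℕ)

@[simp] lemma wK_val : ((wK q m : (Um q m)ˣ) : Um q m) = vK q m := rfl
@[simp] lemma wK_inv_val : ((((wK q m)⁻¹ : (Um q m)ˣ)) : Um q m) = vKi q m := rfl
@[simp] lemma wH_val : ((wH q m : (Um q m)ˣ) : Um q m) = vH q m := rfl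
@[simp] lemma wH_inv_val : ((((wH q m)⁻¹ : (Um q m)ˣ)) : Um q m) = vHi q m := rfl

lemma zK_zero : zK q m 0 = 1 := by simp [zK]
lemma zH_zero : zH q m 0 = 1 := by simp [zH]
lemma zK_one : zK q m 1 = vK q m := by simp [zK]
lemma zH_one : zH q m 1 = vH q m := by simp [zH]
lemma zK_add (i k : ℤ) : zK q m (i + k) = zK q m i * zK q m k := by
  rw [zK, zK, zK, zpow_add, Units.val_mul]
lemma zH_add (i k : ℤ) : zH q m (i + k) = zH q m i * zH q m k := by
  rw [zH, zH, zH, zpow_add, Units.val_mul]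
lemma zK_succ (i : ℤ) : zK q m (i + 1) = zK q m i * vK q m := by rw [zK_add, zK_one]
lemma zH_succ (i : ℤ) : zH q m (i + 1) = zH q m i * vH q m := by rw [zH_add, zH_one]
lemma zK_pred (i : ℤ) : zK q m (i - 1) = zK q m i * vKi q m := by
  rw [zK, zpow_sub_one, Units.val_mul, wK_inv_val]; rfl
lemma zH_pred (i : ℤ) : zH q m (i - 1) = zH q m i * vHi q m := by
  rw [zH, zpow_sub_one, Units.val_mul, wH_inv_val]; rfl

lemma zKH_comm (i j : ℤ) : zK q m i * zH q m j = zH q m j * zK q m i := by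
  have hc : Commute (wK q m) (wH q m) := Units.ext (by simpa using vKH q m)
  have h2 := congrArg Units.val (hc.zpow_zpow i j)
  simpa [zK, zH, Units.val_mul] using h2

section
variable {q : ℂ} {m : ℕ}

lemma zK_mul_F (hq0 : q ≠ 0) (i : ℤ) : zK q m i * vF q m = ((q ^ 2)⁻¹) ^ i • (vF q m * zK q m i) :=
  comm_zpow (wK q m) (vF q m) ((q ^ 2)⁻¹) (inv_ne_zero (pow_ne_zero _ hq0)) (vKF q m) i

lemma zH_mul_F (hq0 : q ≠ 0) (j : ℤ) : zH q m j * vF q m = (q ^ 2) ^ j • (vF q m * zH q m j) :=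
  comm_zpow (wH q m) (vF q m) (q ^ 2) (pow_ne_zero _ hq0) (vHF q m) j

lemma zK_mul_E (hq0 : q ≠ 0) (i : ℤ) : zK q m i * vE q m = (q ^ 2) ^ i • (vE q m * zK q m i) :=
  comm_zpow (wK q m) (vE q m) (q ^ 2) (pow_ne_zero _ hq0) (vKE q m) i

lemma zH_mul_E (hq0 : q ≠ 0) (j : ℤ) : zH q m j * vE q m = ((q ^ 2)⁻¹) ^ j • (vE q m * zH q m j) :=
  comm_zpow (wH q m) (vE q m) ((q ^ 2)⁻¹) (inv_ne_zero (pow_ne_zero _ hq0)) (vHE q m) j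

lemma zK_mul_Fpow (hq0 : q ≠ 0) (i : ℤ) (b : ℕ) :
    zK q m i * (vF q m) ^ b = (((q ^ 2)⁻¹) ^ i) ^ b • ((vF q m) ^ b * zK q m i) :=
  comm_pow _ _ _ (zK_mul_F hq0 i) b

lemma zH_mul_Fpow (hq0 : q ≠ 0) (j : ℤ) (b : ℕ) :
    zH q m j * (vF q m) ^ b = ((q ^ 2) ^ j) ^ b • ((vF q m) ^ b * zH q m j) :=
  comm_pow _ _ _ (zH_mul_F hq0 j) b

end

def mono (p : ℕ × ℤ × ℤ) : Um q m := (vF q m) ^ p.1 * (zK q m p.2.1 * zH q m p.2.2)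

lemma mono_one : mono q m (0, 0, 0) = 1 := by
  simp [mono, zK_zero, zH_zero]

lemma mono_F : mono q m (1, 0, 0) = vF q m := by simp [mono, zK_zero, zH_zero]
lemma mono_K : mono q m (0, 1, 0) = vK q m := by simp [mono, zK_one, zH_zero]
lemma mono_H : mono q m (0, 0, 1) = vH q m := by simp [mono, zK_zero, zH_one]
lemma mono_Ki : mono q m (0, -1, 0) = vKi q m := by
  have : zK q m (-1) = vKi q m := by
    have := zK_pred q m 0
    simpa [zK_zero] using this
  simp [mono, this, zH_zero]
lemma mono_Hi : mono q m (0, 0, -1) = vHi q m := by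
  have : zH q m (-1) = vHi q m := by
    have := zH_pred q m 0
    simpa [zH_zero] using this
  simp [mono, zK_zero, this]

lemma mono_succ (a : ℕ) (i j : ℤ) : mono q m (a + 1, i, j) = vF q m * mono q m (a, i, j) := by
  rw [mono, mono]
  simp only
  rw [pow_succ', mul_assoc]

section
variable {q : ℂ} {m : ℕ}

lemma mono_mul (hq0 : q ≠ 0) (a b : ℕ) (i j k l : ℤ) :
    mono q m (a, i, j) * mono q m (b, k, l)
      = (((q ^ 2) ^ j) ^ b * (((q ^ 2)⁻¹) ^ i) ^ b) • mono q m (a + b, i + k, j + l) := by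
  have key : (zK q m i * zH q m j) * ((vF q m) ^ b * (zK q m k * zH q m l))
      = (((q ^ 2) ^ j) ^ b * (((q ^ 2)⁻¹) ^ i) ^ b)
          • ((vF q m) ^ b * (zK q m (i + k) * zH q m (j + l))) := by
    calc (zK q m i * zH q m j) * ((vF q m) ^ b * (zK q m k * zH q m l))
        = zK q m i * ((zH q m j * (vF q m) ^ b) * (zK q m k * zH q m l)) := by
          rw [mul_assoc, ← mul_assoc (zH q m j)]
      _ = ((q ^ 2) ^ j) ^ b • (zK q m i * ((vF q m) ^ b * (zH q m j * (zK q m k * zH q m l)))) := by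
          rw [zH_mul_Fpow hq0, smul_mul_assoc, mul_smul_comm, mul_assoc]
      _ = ((q ^ 2) ^ j) ^ b • ((zK q m i * (vF q m) ^ b) * (zH q m j * (zK q m k * zH q m l))) := by
          rw [mul_assoc]
      _ = (((q ^ 2) ^ j) ^ b * (((q ^ 2)⁻¹) ^ i) ^ b)
            • ((vF q m) ^ b * (zK q m i * (zH q m j * (zK q m k * zH q m l)))) := by
          rw [zK_mul_Fpow hq0, smul_mul_assoc, smul_smul, mul_assoc]
      _ = (((q ^ 2) ^ j) ^ b * (((q ^ 2)⁻¹) ^ i) ^ b)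
            • ((vF q m) ^ b * (zK q m (i + k) * zH q m (j + l))) := by
          have inner : zK q m i * (zH q m j * (zK q m k * zH q m l))
              = zK q m (i + k) * zH q m (j + l) := by
            calc zK q m i * (zH q m j * (zK q m k * zH q m l))
                = zK q m i * ((zH q m j * zK q m k) * zH q m l) := by rw [mul_assoc]
              _ = zK q m i * ((zK q m k * zH q m j) * zH q m l) := by
                  rw [← zKH_comm q m k j]
              _ = (zK q m i * zK q m k) * (zH q m j * zH q m l) := by
                  rw [mul_assoc (zK q m k), ← mul_assoc (zK q m i)]
              _ = zK q m (i + k) * zH q m (j + l) := by rw [← zK_add, ← zH_add]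
          rw [inner]
  rw [mono, mono, mono]
  simp only
  rw [mul_assoc, key, mul_smul_comm, ← mul_assoc, ← pow_add]

end

end St13
end USide2
noncomputable section USide3
namespace St13

variable (q : ℂ) (m : ℕ)

lemma vF_mem : vF q m ∈ Bsub q m := Algebra.subset_adjoin (by simp)
lemma vK_mem : vK q m ∈ Bsub q m := Algebra.subset_adjoin (by simp)
lemma vKi_mem : vKi q m ∈ Bsub q m := Algebra.subset_adjoin (by simp)
lemma vH_mem : vH q m ∈ Bsub q m := Algebra.subset_adjoin (by simp)
lemma vHi_mem : vHi q m ∈ Bsub q m := Algebra.subset_adjoin (by simp)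

lemma zK_mem (i : ℤ) : zK q m i ∈ Bsub q m := by
  induction i using Int.induction_on with
  | zero => rw [zK_zero]; exact one_mem _
  | succ n ih => rw [zK_succ]; exact mul_mem ih (vK_mem q m)
  | pred n ih => rw [show -(n:ℤ) - 1 = -(n:ℤ) - 1 from rfl, zK_pred]
                 exact mul_mem ih (vKi_mem q m)

lemma zH_mem (j : ℤ) : zH q m j ∈ Bsub q m := by
  induction j using Int.induction_on with
  | zero => rw [zH_zero]; exact one_mem _
  | succ n ih => rw [zH_succ]; exact mul_mem ih (vH_mem q m)
  | pred n ih => rw [show -(n:ℤ) - 1 = -(n:ℤ) - 1 from rfl, zH_pred]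
                 exact mul_mem ih (vHi_mem q m)

lemma mono_mem (p : ℕ × ℤ × ℤ) : mono q m p ∈ Bsub q m :=
  mul_mem (pow_mem (vF_mem q m) _) (mul_mem (zK_mem q m _) (zH_mem q m _))

def BS : Submodule ℂ (Um q m) := Submodule.span ℂ (Set.range (mono q m))

lemma mono_mem_BS (p : ℕ × ℤ × ℤ) : mono q m p ∈ BS q m :=
  Submodule.subset_span ⟨p, rfl⟩

lemma BS_le : BS q m ≤ Subalgebra.toSubmodule (Bsub q m) := by
  rw [BS, Submodule.span_le]
  rintro _ ⟨p, rfl⟩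
  exact mono_mem q m p

lemma BS_mul_le {q : ℂ} {m : ℕ} (hq0 : q ≠ 0) : BS q m * BS q m ≤ BS q m := by
  rw [BS, Submodule.span_mul_span, Submodule.span_le]
  rintro x hx
  obtain ⟨-, ⟨⟨a,i,j⟩, rfl⟩, -, ⟨⟨b,k,l⟩, rfl⟩, rfl⟩ := hx
  show mono q m (a,i,j) * mono q m (b,k,l) ∈ _
  rw [mono_mul hq0]
  exact Submodule.smul_mem _ _ (mono_mem_BS q m _)

def BSalg {q : ℂ} {m : ℕ} (hq0 : q ≠ 0) : Subalgebra ℂ (Um q m) :=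
  Submodule.toSubalgebra (BS q m) (mono_one q m ▸ mono_mem_BS q m _)
    (fun x y hx hy => BS_mul_le hq0 (Submodule.mul_mem_mul hx hy))

lemma B_eq_BS {q : ℂ} {m : ℕ} (hq0 : q ≠ 0) :
    Subalgebra.toSubmodule (Bsub q m) = BS q m := by
  refine le_antisymm ?_ (BS_le q m)
  have hle : Bsub q m ≤ BSalg hq0 := by
    apply Algebra.adjoin_le
    intro g hg
    simp only [Set.mem_insert_iff, Set.mem_singleton_iff] at hg
    rcases hg with rfl|rfl|rfl|rfl|rfl
    · show vF q m ∈ BS q m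
      rw [← mono_F q m]
      exact mono_mem_BS q m _
    · show vK q m ∈ BS q m
      rw [← mono_K q m]
      exact mono_mem_BS q m _
    · show vKi q m ∈ BS q m
      rw [← mono_Ki q m]
      exact mono_mem_BS q m _
    · show vH q m ∈ BS q m
      rw [← mono_H q m]
      exact mono_mem_BS q m _
    · show vHi q m ∈ BS q m
      rw [← mono_Hi q m]
      exact mono_mem_BS q m _
  exact fun x hx => hle hx

def rbar (q : ℂ) (hq0 : q ≠ 0) (c : ℂ) (m : ℕ) : Um q m →ₐ[ℂ] Module.End ℂ MM :=
  RingQuot.liftAlgHom ℂ ⟨rho q c m, fun x y h => rho_rel q c hq0 m h⟩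

variable {q} {m} (hq0 : q ≠ 0) (c : ℂ)

lemma rbar_mk (x : FA) : rbar q hq0 c m (mk q m x) = rho q c m x :=
  RingQuot.liftAlgHom_mkAlgHom_apply ℂ _ _ _

lemma rbar_vE : rbar q hq0 c m (vE q m) = eOp q c m := by
  rw [show vE q m = mk q m gE from rfl, rbar_mk, rho_gE]
lemma rbar_vF : rbar q hq0 c m (vF q m) = fOp := by
  rw [show vF q m = mk q m gF from rfl, rbar_mk, rho_gF]
lemma rbar_vK : rbar q hq0 c m (vK q m) = kOp q := by
  rw [show vK q m = mk q m gK from rfl, rbar_mk, rho_gK]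
lemma rbar_vKi : rbar q hq0 c m (vKi q m) = kiOp q := by
  rw [show vKi q m = mk q m gKi from rfl, rbar_mk, rho_gKi]
lemma rbar_vH : rbar q hq0 c m (vH q m) = hOp q := by
  rw [show vH q m = mk q m gH from rfl, rbar_mk, rho_gH]
lemma rbar_vHi : rbar q hq0 c m (vHi q m) = hiOp q := by
  rw [show vHi q m = mk q m gHi from rfl, rbar_mk, rho_gHi]

def phi : Um q m →ₗ[ℂ] MM where
  toFun u := rbar q hq0 c m u (sng (0,0,0))
  map_add' x y := by simp [map_add]
  map_smul' s x := by simp [map_smul]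

lemma phi_apply (u : Um q m) : phi hq0 c u = rbar q hq0 c m u (sng (0,0,0)) := rfl

def psi (q : ℂ) (m : ℕ) : MM →ₗ[ℂ] Um q m := Finsupp.lift _ ℂ _ (mono q m)

lemma psi_sng (p : ℕ × ℤ × ℤ) : psi q m (sng p) = mono q m p := by
  simp [psi, sng, Finsupp.lift_apply, Finsupp.sum_single_index]

lemma fOp_pow_sng (b a : ℕ) (i j : ℤ) : (fOp ^ b) (sng (a,i,j)) = sng (a+b,i,j) := by
  induction b with
  | zero => simp
  | succ n ih =>
      rw [pow_succ', Module.End.mul_apply, ih, fOp_sng, Nat.add_assoc]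

lemma rb_zH (j k l : ℤ) : rbar q hq0 c m (zH q m j) (sng (0,k,l)) = sng (0,k,l+j) := by
  induction j using Int.induction_on generalizing l with
  | zero => rw [zH_zero, map_one, Module.End.one_apply, add_zero]
  | succ n ih =>
      rw [zH_succ, map_mul, Module.End.mul_apply, rbar_vH, hOp_sng, pow_zero, one_smul, ih,
        show l + 1 + (n:ℤ) = l + ((n:ℤ)+1) by ring]
  | pred n ih =>
      rw [show -(n:ℤ) - 1 = -(n:ℤ) - 1 from rfl, zH_pred, map_mul, Module.End.mul_apply,
        rbar_vHi, hiOp_sng, pow_zero, one_smul, ih,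
        show l - 1 + -(n:ℤ) = l + (-(n:ℤ) - 1) by ring]

lemma rb_zK (i k l : ℤ) : rbar q hq0 c m (zK q m i) (sng (0,k,l)) = sng (0,k+i,l) := by
  induction i using Int.induction_on generalizing k with
  | zero => rw [zK_zero, map_one, Module.End.one_apply, add_zero]
  | succ n ih =>
      rw [zK_succ, map_mul, Module.End.mul_apply, rbar_vK, kOp_sng, pow_zero, one_smul, ih,
        show k + 1 + (n:ℤ) = k + ((n:ℤ)+1) by ring]
  | pred n ih =>
      rw [show -(n:ℤ) - 1 = -(n:ℤ) - 1 from rfl, zK_pred, map_mul, Module.End.mul_apply,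
        rbar_vKi, kiOp_sng, pow_zero, one_smul, ih,
        show k - 1 + -(n:ℤ) = k + (-(n:ℤ) - 1) by ring]

lemma phi_mono (p : ℕ × ℤ × ℤ) : phi hq0 c (mono q m p) = sng p := by
  obtain ⟨a, i, j⟩ := p
  rw [phi_apply, mono, map_mul, map_mul, map_pow, Module.End.mul_apply, Module.End.mul_apply,
    rbar_vF, rb_zH, rb_zK, fOp_pow_sng, zero_add, zero_add, zero_add]

end St13
end USide3
open St13 in
/-- For every `c ∈ ℂ`, `c ≠ 0`, the algebra `U = U_q(f_m(K,H))`
decomposes as an internal direct sum of ℂ-vector spaces `U = B ⊕ U(E - c)`. -/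
theorem stmt13 (q : ℂ) (hq0 : q ≠ 0) (hq : ∀ n : ℕ, 0 < n → q ^ n ≠ 1)
    (m : ℕ) (hm : 1 ≤ m) (c : ℂ) (hc : c ≠ 0) :
    IsCompl (Subalgebra.toSubmodule (Bsub q m))
      (Submodule.restrictScalars ℂ (Lc q m c)) := by
  classical
  have hq2 : q ^ 2 ≠ 0 := pow_ne_zero _ hq0
  have hgLc : vE q m - algebraMap ℂ (Um q m) c ∈ Lc q m c :=
    Submodule.subset_span rfl
  -- φ kills the left ideal
  have phiL : ∀ x ∈ Lc q m c, phi hq0 c x = 0 := by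
    intro x hx
    induction hx using Submodule.span_induction with
    | mem y hy =>
        rw [Set.mem_singleton_iff] at hy
        subst hy
        rw [map_sub, phi_apply, phi_apply, rbar_vE, AlgHom.commutes,
          Module.algebraMap_end_apply, eOp_sng]
        simp
    | zero => rw [map_zero]
    | add x y hx hy ihx ihy => rw [map_add, ihx, ihy, add_zero]
    | smul a x hx ih =>
        have : a • x = a * x := rfl
        rw [this, phi_apply, map_mul, Module.End.mul_apply, ← phi_apply, ih, map_zero]
  have hrec : ∀ x ∈ BS q m, psi q m (phi hq0 c x) = x := by
    intro x hx
    induction hx using Submodule.span_induction with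
    | mem y hy =>
        obtain ⟨p, rfl⟩ := hy
        rw [phi_mono, psi_sng]
    | zero => rw [map_zero, map_zero]
    | add x y hx hy ihx ihy => rw [map_add, map_add, ihx, ihy]
    | smul a x hx ih => rw [map_smul, map_smul, ih]
  constructor
  · -- disjointness
    rw [Submodule.disjoint_def]
    intro x hxB hxL
    have hxB' : x ∈ BS q m := B_eq_BS hq0 ▸ hxB
    have hpsi := hrec x hxB'
    rw [phiL x hxL, map_zero] at hpsi
    exact hpsi.symm
  · -- codisjointness
    set T := Subalgebra.toSubmodule (Bsub q m) ⊔ Submodule.restrictScalars ℂ (Lc q m c)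
      with hT
    have hBT : ∀ b ∈ Bsub q m, ∀ t ∈ T, b * t ∈ T := by
      intro b hb t ht
      obtain ⟨u, hu, v, hv, rfl⟩ := Submodule.mem_sup.mp ht
      rw [mul_add]
      refine add_mem (Submodule.mem_sup_left ?_) (Submodule.mem_sup_right ?_)
      · exact (Subalgebra.mem_toSubmodule _).mpr
          (mul_mem hb ((Subalgebra.mem_toSubmodule _).mp hu))
      · exact Submodule.smul_mem (Lc q m c) b hv
    have hD : mk q m (fm q m) ∈ Bsub q m := by
      have e : mk q m (fm q m) = (q - q⁻¹)⁻¹ • ((vK q m) ^ m - (vH q m) ^ m) := by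
        show mk q m ((q - q⁻¹)⁻¹ • (gK ^ m - gH ^ m)) = _
        rw [map_smul, map_sub, map_pow, map_pow]
        rfl
      rw [e]
      exact Subalgebra.smul_mem _
        (sub_mem (pow_mem (vK_mem q m) m) (pow_mem (vH_mem q m) m)) _
    -- E times a monomial stays in B + L
    have key : ∀ (a : ℕ) (i j : ℤ), vE q m * mono q m (a, i, j) ∈ T := by
      intro a
      induction a with
      | zero =>
          intro i j
          have m0 : mono q m (0, i, j) = zK q m i * zH q m j := by
            rw [mono]; simp
          have h1 : vE q m * zK q m i = ((q ^ 2) ^ i)⁻¹ • (zK q m i * vE q m) :=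
            ((inv_smul_eq_iff₀ (zpow_ne_zero i hq2)).mpr (zK_mul_E hq0 i)).symm
          have h2 : vE q m * zH q m j = (((q ^ 2)⁻¹) ^ j)⁻¹ • (zH q m j * vE q m) :=
            ((inv_smul_eq_iff₀ (zpow_ne_zero j (inv_ne_zero hq2))).mpr
              (zH_mul_E hq0 j)).symm
          have hcalc : vE q m * (zK q m i * zH q m j)
              = (((q ^ 2) ^ i)⁻¹ * (((q ^ 2)⁻¹) ^ j)⁻¹)
                  • ((zK q m i * zH q m j) * vE q m) := by
            calc vE q m * (zK q m i * zH q m j)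
                = (vE q m * zK q m i) * zH q m j := by rw [mul_assoc]
              _ = ((q ^ 2) ^ i)⁻¹ • (zK q m i * (vE q m * zH q m j)) := by
                  rw [h1, smul_mul_assoc, mul_assoc]
              _ = (((q ^ 2) ^ i)⁻¹ * (((q ^ 2)⁻¹) ^ j)⁻¹)
                    • ((zK q m i * zH q m j) * vE q m) := by
                  rw [h2, mul_smul_comm, smul_smul, mul_assoc]
          rw [m0, hcalc]
          refine Submodule.smul_mem _ _ ?_
          have hsplit : (zK q m i * zH q m j) * vE q m
              = (zK q m i * zH q m j) * (vE q m - algebraMap ℂ (Um q m) c)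
                + c • (zK q m i * zH q m j) := by
            rw [mul_sub]
            have : (zK q m i * zH q m j) * algebraMap ℂ (Um q m) c
                = c • (zK q m i * zH q m j) := by
              rw [← Algebra.commutes, ← Algebra.smul_def]
            rw [this, sub_add_cancel]
          rw [hsplit]
          refine add_mem (Submodule.mem_sup_right ?_) (Submodule.mem_sup_left ?_)
          · exact Submodule.smul_mem (Lc q m c) _ hgLc
          · exact (Subalgebra.mem_toSubmodule _).mpr
              (Subalgebra.smul_mem _ (mul_mem (zK_mem q m i) (zH_mem q m j)) _)
      | succ n ih =>
          intro i j
          rw [mono_succ, ← mul_assoc, vEF, add_mul, mul_assoc]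
          refine add_mem (hBT _ (vF_mem q m) _ (ih i j)) (Submodule.mem_sup_left ?_)
          exact (Subalgebra.mem_toSubmodule _).mpr (mul_mem hD (mono_mem q m _))
    have hEB : ∀ b ∈ Bsub q m, vE q m * b ∈ T := by
      intro b hb
      have hb' : b ∈ BS q m := B_eq_BS hq0 ▸ hb
      clear hb
      induction hb' using Submodule.span_induction with
      | mem y hy =>
          obtain ⟨⟨a, i, j⟩, rfl⟩ := hy
          exact key a i j
      | zero => rw [mul_zero]; exact zero_mem _
      | add x y hx hy ihx ihy => rw [mul_add]; exact add_mem ihx ihy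
      | smul a x hx ih => rw [mul_smul_comm]; exact Submodule.smul_mem _ _ ih
    have hET : ∀ t ∈ T, vE q m * t ∈ T := by
      intro t ht
      obtain ⟨u, hu, v, hv, rfl⟩ := Submodule.mem_sup.mp ht
      rw [mul_add]
      refine add_mem (hEB u hu) (Submodule.mem_sup_right ?_)
      exact Submodule.smul_mem (Lc q m c) _ hv
    have hAll : ∀ u : Um q m, ∀ t ∈ T, u * t ∈ T := by
      intro u
      obtain ⟨x, rfl⟩ := RingQuot.mkAlgHom_surjective ℂ (URel q (fm q m)) u
      induction x using FreeAlgebra.induction with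
      | grade0 r =>
          intro t ht
          rw [AlgHom.commutes, ← Algebra.smul_def]
          exact Submodule.smul_mem _ _ ht
      | grade1 g =>
          cases g with
          | E => exact hET
          | F => exact hBT _ (vF_mem q m)
          | K => exact hBT _ (vK_mem q m)
          | Kinv => exact hBT _ (vKi_mem q m)
          | H => exact hBT _ (vH_mem q m)
          | Hinv => exact hBT _ (vHi_mem q m)
      | mul x y ihx ihy =>
          intro t ht
          rw [map_mul, mul_assoc]
          exact ihx _ (ihy t ht)
      | add x y ihx ihy =>
          intro t ht
          rw [map_add, add_mul]
          exact add_mem (ihx t ht) (ihy t ht)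
    rw [codisjoint_iff, eq_top_iff]
    intro u _
    have h1 : (1 : Um q m) ∈ T := Submodule.mem_sup_left (one_mem (Bsub q m))
    have := hAll u 1 h1
    rwa [mul_one] at this
end Rep
end
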